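/- arXiv:1903.01095 — 9 statements merged into one kernel-verified Lean document; each statement's English description precedes it below -/
import Mathlib

section
/- For all integers w ≥ 1 and h ≥ 1, with s = w + h, the number B of parallelogram polyominoes of width w and height h satisfies (s−1)·B = C(s−1, w)·C(s−1, h); that is, B is the Narayana number (1/(s−1))·C(s−1,w)·C(s−1,h). -/
/-- Two cells of `ℤ × ℤ` are adjacent if they share an edge. -/
def CellAdj (a b : ℤ × ℤ) : Prop :=
  (a.1 - b.1).natAbs + (a.2 - b.2).natAbs = 1

/-- A polyomino: a nonempty finite set of cells that is connected
with respect to edge-adjacency. -/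
def IsPolyomino (P : Finset (ℤ × ℤ)) : Prop :=
  P.Nonempty ∧
    ∀ a ∈ P, ∀ b ∈ P,
      Relation.ReflTransGen (fun x y => x ∈ P ∧ y ∈ P ∧ CellAdj x y) a b

/-- Convexity: every row and every column of the polyomino is an
interval of integers. -/
def IsConvexSet (P : Finset (ℤ × ℤ)) : Prop :=
  (∀ i₁ i₂ i₃ j : ℤ, i₁ ≤ i₂ → i₂ ≤ i₃ → (i₁, j) ∈ P → (i₃, j) ∈ P → (i₂, j) ∈ P) ∧
  (∀ j₁ j₂ j₃ i : ℤ, j₁ ≤ j₂ → j₂ ≤ j₃ → (i, j₁) ∈ P → (i, j₃) ∈ P → (i, j₂) ∈ P)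

/-- The polyomino has width `w` and height `h`, i.e. enclosing
rectangle `[0,w] × [0,h]`. -/
def HasDims (w h : ℕ) (P : Finset (ℤ × ℤ)) : Prop :=
  (∀ c ∈ P, 0 ≤ c.1 ∧ c.1 ≤ (w : ℤ) - 1 ∧ 0 ≤ c.2 ∧ c.2 ≤ (h : ℤ) - 1) ∧
  (∃ c ∈ P, c.1 = 0) ∧ (∃ c ∈ P, c.1 = (w : ℤ) - 1) ∧
  (∃ c ∈ P, c.2 = 0) ∧ (∃ c ∈ P, c.2 = (h : ℤ) - 1)

/-- A convex polyomino of width `w` and height `h`. -/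
def IsConvexPolyomino (w h : ℕ) (P : Finset (ℤ × ℤ)) : Prop :=
  IsPolyomino P ∧ IsConvexSet P ∧ HasDims w h P

/-- A parallelogram polyomino of width `w` and height `h`: a convex
polyomino with enclosing rectangle `[0,w]×[0,h]` containing both the
cell `(0,0)` and the cell `(w-1, h-1)`. -/
def IsParallelogramPolyomino (w h : ℕ) (P : Finset (ℤ × ℤ)) : Prop :=
  IsConvexPolyomino w h P ∧ ((0 : ℤ), (0 : ℤ)) ∈ P ∧
    ((w : ℤ) - 1, (h : ℤ) - 1) ∈ P

namespace PPoly
open Finset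

/-- prefix count -/
def cnt (X : Finset ℕ) (t : ℕ) : ℕ := #(X.filter (fun v => v ≤ t))

def Dom (X Y : Finset ℕ) : Prop := ∀ t, cnt Y t ≤ cnt X t

def SetCond (N k : ℕ) (q : Finset ℕ × Finset ℕ) : Prop :=
  q.1 ⊆ Icc 1 N ∧ q.2 ⊆ Icc 1 N ∧ q.1.card = k ∧ q.2.card = k ∧ Dom q.1 q.2

lemma cnt_mono (X : Finset ℕ) {t t' : ℕ} (h : t ≤ t') : cnt X t ≤ cnt X t' := by
  apply card_le_card
  intro v hv
  simp only [mem_filter] at hv ⊢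
  exact ⟨hv.1, le_trans hv.2 h⟩

lemma cnt_succ_le (X : Finset ℕ) (t : ℕ) : cnt X (t+1) ≤ cnt X t + 1 := by
  have hsub : X.filter (fun v => v ≤ t+1) ⊆ insert (t+1) (X.filter (fun v => v ≤ t)) := by
    intro v hv
    simp only [mem_filter] at hv
    rcases Nat.lt_or_ge v (t+1) with h | h
    · exact mem_insert_of_mem (mem_filter.2 ⟨hv.1, by omega⟩)
    · have : v = t+1 := by omega
      simp [this]
  calc cnt X (t+1) ≤ #(insert (t+1) (X.filter (fun v => v ≤ t))) := card_le_card hsub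
    _ ≤ cnt X t + 1 := by rw [cnt]; exact card_insert_le _ _

lemma cnt_zero {N : ℕ} {X : Finset ℕ} (hX : X ⊆ Icc 1 N) : cnt X 0 = 0 := by
  rw [cnt, card_eq_zero]
  apply filter_eq_empty_iff.2
  intro v hv
  have := hX hv
  simp only [mem_Icc] at this
  omega

lemma cnt_of_ge {N : ℕ} {X : Finset ℕ} (hX : X ⊆ Icc 1 N) {t : ℕ} (ht : N ≤ t) :
    cnt X t = X.card := by
  rw [cnt, filter_true_of_mem]
  intro v hv
  have := hX hv
  simp only [mem_Icc] at this
  omega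

lemma cnt_le_card (X : Finset ℕ) (t : ℕ) : cnt X t ≤ X.card := card_le_card (filter_subset _ _)

/-- tail swap at threshold t0 -/
def sw (X Y : Finset ℕ) (t0 : ℕ) : Finset ℕ :=
  X.filter (fun v => v ≤ t0) ∪ Y.filter (fun v => ¬ v ≤ t0)

lemma sw_subset {N : ℕ} {X Y : Finset ℕ} (hX : X ⊆ Icc 1 N) (hY : Y ⊆ Icc 1 N) (t0 : ℕ) :
    sw X Y t0 ⊆ Icc 1 N := by
  intro v hv
  rcases mem_union.1 hv with h | h
  · exact hX (mem_filter.1 h).1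
  · exact hY (mem_filter.1 h).1

lemma cnt_sw_of_le {X Y : Finset ℕ} {t t0 : ℕ} (h : t ≤ t0) :
    cnt (sw X Y t0) t = cnt X t := by
  unfold cnt sw
  congr 1
  ext v
  simp only [mem_filter, mem_union]
  constructor
  · rintro ⟨hm, hle⟩
    rcases hm with ⟨hX, _⟩ | ⟨_, hn⟩
    · exact ⟨hX, hle⟩
    · omega
  · rintro ⟨hX, hle⟩
    exact ⟨Or.inl ⟨hX, le_trans hle h⟩, hle⟩

lemma filter_sw_not_le (X Y : Finset ℕ) (t0 : ℕ) :
    (sw X Y t0).filter (fun v => ¬ v ≤ t0) = Y.filter (fun v => ¬ v ≤ t0) := by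
  ext v
  simp only [sw, mem_filter, mem_union]
  tauto

lemma filter_sw_le (X Y : Finset ℕ) (t0 : ℕ) :
    (sw X Y t0).filter (fun v => v ≤ t0) = X.filter (fun v => v ≤ t0) := by
  ext v
  simp only [sw, mem_filter, mem_union]
  tauto

lemma sw_sw (X Y : Finset ℕ) (t0 : ℕ) : sw (sw X Y t0) (sw Y X t0) t0 = X := by
  rw [sw, filter_sw_le, filter_sw_not_le, filter_union_filter_not_eq]

lemma card_sw (X Y : Finset ℕ) (t0 : ℕ) :
    (sw X Y t0).card = cnt X t0 + (Y.card - cnt Y t0) := by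
  rw [sw, card_union_of_disjoint]
  · have := card_filter_add_card_filter_not (s := Y) (p := fun v => v ≤ t0)
    unfold cnt
    omega
  · rw [disjoint_left]
    intro v hv hv'
    simp only [mem_filter] at hv hv'
    omega


lemma crossing_succ {N : ℕ} {X Y : Finset ℕ} (hY : Y ⊆ Icc 1 N)
    (hex : ∃ t, cnt X t < cnt Y t) :
    cnt Y (Nat.find hex) = cnt X (Nat.find hex) + 1 := by
  have hspec : cnt X (Nat.find hex) < cnt Y (Nat.find hex) := Nat.find_spec hex
  have ht0pos : 1 ≤ Nat.find hex := by
    rcases Nat.eq_zero_or_pos (Nat.find hex) with h | h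
    · rw [h, cnt_zero hY] at hspec; omega
    · exact h
  obtain ⟨t', ht'⟩ : ∃ t', Nat.find hex = t' + 1 := ⟨Nat.find hex - 1, by omega⟩
  have hmin : ¬ (cnt X t' < cnt Y t') := Nat.find_min hex (by omega)
  have h1 := cnt_succ_le Y t'
  have h2 := cnt_mono X (show t' ≤ t' + 1 by omega)
  rw [ht'] at hspec ⊢
  omega

lemma find_sw (X Y : Finset ℕ) (hex : ∃ t, cnt X t < cnt Y t)
    (hex' : ∃ t, cnt (sw X Y (Nat.find hex)) t < cnt (sw Y X (Nat.find hex)) t) :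
    Nat.find hex' = Nat.find hex := by
  rw [Nat.find_eq_iff]
  constructor
  · rw [cnt_sw_of_le le_rfl, cnt_sw_of_le le_rfl]
    exact Nat.find_spec hex
  · intro m hm
    rw [cnt_sw_of_le hm.le, cnt_sw_of_le hm.le]
    exact Nat.find_min hex hm

open Classical in
noncomputable def pairsF (N k l : ℕ) : Finset (Finset ℕ × Finset ℕ) :=
  (Icc 1 N).powersetCard k ×ˢ (Icc 1 N).powersetCard l

lemma card_Icc1 (N : ℕ) : #(Icc 1 N) = N := by rw [Nat.card_Icc]; omega

lemma card_pairsF (N k l : ℕ) : (pairsF N k l).card = N.choose k * N.choose l := by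
  rw [pairsF, card_product, card_powersetCard, card_powersetCard, card_Icc1]

lemma mem_pairsF {N k l : ℕ} {q : Finset ℕ × Finset ℕ} :
    q ∈ pairsF N k l ↔ q.1 ⊆ Icc 1 N ∧ q.2 ⊆ Icc 1 N ∧ q.1.card = k ∧ q.2.card = l := by
  rw [pairsF, mem_product, mem_powersetCard, mem_powersetCard]
  tauto

open Classical in
noncomputable def goodF (N k : ℕ) : Finset (Finset ℕ × Finset ℕ) :=
  (pairsF N k k).filter (fun q => Dom q.1 q.2)

open Classical in
noncomputable def badF (N k : ℕ) : Finset (Finset ℕ × Finset ℕ) :=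
  (pairsF N k k).filter (fun q => ¬ Dom q.1 q.2)

lemma good_add_bad (N k : ℕ) :
    (goodF N k).card + (badF N k).card = N.choose k * N.choose k := by
  classical
  rw [← card_pairsF N k k, goodF, badF]
  exact card_filter_add_card_filter_not _

lemma mem_badF {N k : ℕ} {q : Finset ℕ × Finset ℕ} :
    q ∈ badF N k ↔ (q.1 ⊆ Icc 1 N ∧ q.2 ⊆ Icc 1 N ∧ q.1.card = k ∧ q.2.card = k)
      ∧ ∃ t, cnt q.1 t < cnt q.2 t := by
  classical
  rw [badF, mem_filter, mem_pairsF, Dom]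
  push_neg
  tauto

lemma sw_sw_pair (X Y : Finset ℕ) (hex : ∃ t, cnt X t < cnt Y t)
    (hex' : ∃ t, cnt (sw X Y (Nat.find hex)) t < cnt (sw Y X (Nat.find hex)) t) :
    (sw (sw X Y (Nat.find hex)) (sw Y X (Nat.find hex)) (Nat.find hex'),
     sw (sw Y X (Nat.find hex)) (sw X Y (Nat.find hex)) (Nat.find hex')) = (X, Y) := by
  rw [find_sw X Y hex hex', sw_sw, sw_sw]

lemma card_badF (N k : ℕ) (hk : 1 ≤ k) :
    (badF N k).card = N.choose (k-1) * N.choose (k+1) := by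
  classical
  rw [← card_pairsF N (k-1) (k+1)]
  have memBad : ∀ q ∈ badF N k, ∃ t, cnt q.1 t < cnt q.2 t :=
    fun q hq => (mem_badF.1 hq).2
  have memPair : ∀ q ∈ pairsF N (k-1) (k+1), ∃ t, cnt q.1 t < cnt q.2 t := by
    intro q hq
    rw [mem_pairsF] at hq
    refine ⟨N, ?_⟩
    rw [cnt_of_ge hq.1 le_rfl, cnt_of_ge hq.2.1 le_rfl, hq.2.2.1, hq.2.2.2]
    omega
  refine card_bij' (fun q hq =>
      (sw q.1 q.2 (Nat.find (memBad q hq)), sw q.2 q.1 (Nat.find (memBad q hq))))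
    (fun q hq =>
      (sw q.1 q.2 (Nat.find (memPair q hq)), sw q.2 q.1 (Nat.find (memPair q hq))))
    ?_ ?_ ?_ ?_
  · -- hi : image lands in pairsF N (k-1) (k+1)
    intro q hq
    obtain ⟨⟨h1, h2, hc1, hc2⟩, -⟩ := mem_badF.1 hq
    have hcross : cnt q.2 (Nat.find (memBad q hq)) = cnt q.1 (Nat.find (memBad q hq)) + 1 :=
      crossing_succ h2 (memBad q hq)
    have hspec : cnt q.1 (Nat.find (memBad q hq)) < cnt q.2 (Nat.find (memBad q hq)) :=
      Nat.find_spec (memBad q hq)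
    have hle1 : cnt q.1 (Nat.find (memBad q hq)) ≤ q.1.card := cnt_le_card _ _
    have hle2 : cnt q.2 (Nat.find (memBad q hq)) ≤ q.2.card := cnt_le_card _ _
    rw [mem_pairsF]
    refine ⟨sw_subset h1 h2 _, sw_subset h2 h1 _, ?_, ?_⟩
    · rw [card_sw]; omega
    · rw [card_sw]; omega
  · -- hj
    intro q hq
    obtain ⟨h1, h2, hc1, hc2⟩ := mem_pairsF.1 hq
    have hcross : cnt q.2 (Nat.find (memPair q hq)) = cnt q.1 (Nat.find (memPair q hq)) + 1 :=
      crossing_succ h2 (memPair q hq)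
    have hle1 : cnt q.1 (Nat.find (memPair q hq)) ≤ q.1.card := cnt_le_card _ _
    have hle2 : cnt q.2 (Nat.find (memPair q hq)) ≤ q.2.card := cnt_le_card _ _
    rw [mem_badF]
    refine ⟨⟨sw_subset h1 h2 _, sw_subset h2 h1 _, ?_, ?_⟩, ?_⟩
    · rw [card_sw]; omega
    · rw [card_sw]; omega
    · refine ⟨Nat.find (memPair q hq), ?_⟩
      rw [cnt_sw_of_le le_rfl, cnt_sw_of_le le_rfl]
      exact Nat.find_spec (memPair q hq)
  · -- left inverse
    rintro ⟨X, Y⟩ hq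
    exact sw_sw_pair X Y (memBad (X, Y) hq) _
  · -- right inverse
    rintro ⟨X, Y⟩ hq
    exact sw_sw_pair X Y (memPair (X, Y) hq) _


lemma choose_identity (N k : ℕ) (hk : 1 ≤ k) (hkN : k ≤ N) :
    (N+1) * (N.choose k * N.choose k) =
      (N+1).choose (k+1) * (N+1).choose k + (N+1) * (N.choose (k-1) * N.choose (k+1)) := by
  obtain ⟨k', rfl⟩ : ∃ k', k = k' + 1 := ⟨k-1, by omega⟩
  have hsub : k' + 1 - 1 = k' := by omega
  rw [hsub]
  set c := N.choose (k'+1) with hc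
  set cm := N.choose k' with hcm
  set cp := N.choose (k'+2) with hcp
  have h1 : (N+1).choose (k'+2) * (k'+2) = (N+1) * c := (Nat.add_one_mul_choose_eq N (k'+1)).symm
  have h2 : cp * (k'+2) = c * (N - (k'+1)) := Nat.choose_succ_right_eq N (k'+1)
  have h3 : c * (k'+1) = cm * (N - k') := Nat.choose_succ_right_eq N k'
  have h4 : (N+1).choose (k'+1) = cm + c := Nat.choose_succ_succ N k'
  have hNk : N - k' = (N - (k'+1)) + 1 := by omega
  have key : c * (k'+2) = (N+1).choose (k'+1) + cm * (N - (k'+1)) := by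
    have e1 : c * (k'+2) = c * (k'+1) + c := by ring
    have e2 : cm * ((N - (k'+1)) + 1) = cm * (N - (k'+1)) + cm := by ring
    rw [h4, e1, h3, hNk, e2]
    omega
  apply Nat.eq_of_mul_eq_mul_right (Nat.succ_pos (k'+1))
  calc (N+1) * (c * c) * (k'+2)
      = ((N+1) * c) * (c * (k'+2)) := by ring
    _ = ((N+1) * c) * ((N+1).choose (k'+1) + cm * (N - (k'+1))) := by rw [key]
    _ = ((N+1) * c) * (N+1).choose (k'+1) + (N+1) * cm * (c * (N - (k'+1))) := by ring
    _ = ((N+1).choose (k'+2) * (k'+2)) * (N+1).choose (k'+1) + (N+1) * cm * (cp * (k'+2)) := by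
        rw [h1, h2]
    _ = ((N+1).choose (k'+2) * (N+1).choose (k'+1) + (N+1) * (cm * cp)) * (k'+2) := by ring

lemma card_goodF (N k : ℕ) (hk : 1 ≤ k) :
    (N+1) * (goodF N k).card = (N+1).choose (k+1) * (N+1).choose k := by
  rcases le_or_gt k N with hkN | hkN
  · have h := good_add_bad N k
    rw [card_badF N k hk] at h
    have hid := choose_identity N k hk hkN
    apply Nat.add_right_cancel (m := (N+1) * (N.choose (k-1) * N.choose (k+1)))
    rw [← hid, ← Nat.mul_add, h]
  · -- k > N : both sides zero
    have h0 : N.choose k = 0 := Nat.choose_eq_zero_of_lt hkN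
    have hg : (goodF N k).card = 0 := by
      have := good_add_bad N k
      rw [h0] at this
      omega
    rw [hg, Nat.mul_zero, Nat.choose_eq_zero_of_lt (show N + 1 < k + 1 by omega), Nat.zero_mul]

lemma card_goodF_zero (N : ℕ) : (goodF N 0).card = 1 := by
  classical
  have : goodF N 0 = {(∅, ∅)} := by
    apply Finset.Subset.antisymm
    · intro q hq
      rw [goodF, mem_filter, mem_pairsF] at hq
      obtain ⟨⟨_, _, hc1, hc2⟩, _⟩ := hq
      rw [mem_singleton]
      rw [card_eq_zero] at hc1 hc2
      exact Prod.ext hc1 hc2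
    · intro q hq
      rw [mem_singleton] at hq
      subst hq
      rw [goodF, mem_filter, mem_pairsF]
      refine ⟨⟨empty_subset _, empty_subset _, card_empty, card_empty⟩, ?_⟩
      intro t
      exact le_rfl
  rw [this, card_singleton]

lemma natCard_setCond (N k : ℕ) : Nat.card {q // SetCond N k q} = (goodF N k).card := by
  classical
  have hiff : ∀ q, SetCond N k q ↔ q ∈ goodF N k := by
    intro q
    rw [goodF, mem_filter, mem_pairsF, SetCond]
    tauto
  rw [Nat.card_congr (Equiv.subtypeEquivRight hiff), Nat.card_eq_finsetCard]


/-! ### Sequences -/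

def SeqCond (w h : ℕ) (p : (Fin w → ℕ) × (Fin w → ℕ)) : Prop :=
  Monotone p.1 ∧ Monotone p.2 ∧
  (∀ i : Fin w, (i : ℕ) = 0 → p.1 i = 0) ∧
  (∀ i : Fin w, (i : ℕ) = w - 1 → p.2 i = h - 1) ∧
  (∀ i : Fin w, p.1 i ≤ p.2 i) ∧
  (∀ i j : Fin w, (j : ℕ) = (i : ℕ) + 1 → p.1 j ≤ p.2 i)

def fup {w : ℕ} (i : Fin (w-1)) : Fin w := ⟨i.1 + 1, by have := i.isLt; omega⟩
def fdn {w : ℕ} (i : Fin (w-1)) : Fin w := ⟨i.1, by have := i.isLt; omega⟩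

def seqX (w : ℕ) (a : Fin w → ℕ) : Finset ℕ :=
  Finset.image (fun i : Fin (w-1) => a (fup i) + i.1 + 1) Finset.univ
def seqY (w : ℕ) (b : Fin w → ℕ) : Finset ℕ :=
  Finset.image (fun i : Fin (w-1) => b (fdn i) + i.1 + 1) Finset.univ

lemma seqX_strictMono {w : ℕ} {a : Fin w → ℕ} (ha : Monotone a) :
    StrictMono (fun i : Fin (w-1) => a (fup i) + i.1 + 1) := by
  intro i j hij
  have hij' : i.1 < j.1 := hij
  have h1 : a (fup i) ≤ a (fup j) := ha (by rw [Fin.le_def]; exact Nat.succ_le_succ (Nat.le_of_lt hij'))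
  simp only []
  omega

lemma seqY_strictMono {w : ℕ} {b : Fin w → ℕ} (hb : Monotone b) :
    StrictMono (fun i : Fin (w-1) => b (fdn i) + i.1 + 1) := by
  intro i j hij
  have hij' : i.1 < j.1 := hij
  have h1 : b (fdn i) ≤ b (fdn j) := hb (by rw [Fin.le_def]; exact Nat.le_of_lt hij')
  simp only []
  omega

/-- a strictly monotone `Fin k → ℕ` function grows at least linearly -/
lemma sm_gap {k : ℕ} {x : Fin k → ℕ} (hx : StrictMono x) :
    ∀ (d : ℕ) (m m' : Fin k), m.1 + d = m'.1 → x m + d ≤ x m' := by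
  intro d
  induction d with
  | zero => intro m m' hmm; have : m = m' := Fin.ext (by omega); rw [this]; omega
  | succ d ih =>
    intro m m' hmm
    have hm'pos : 0 < m'.1 := by omega
    have hlt : (m'.1 - 1) < k := by have := m'.isLt; omega
    have h1 := ih m ⟨m'.1 - 1, hlt⟩ (by simp only []; omega)
    have h2 : x ⟨m'.1 - 1, hlt⟩ < x m' := hx (by rw [Fin.lt_def]; simp only []; omega)
    omega

lemma sm_lb {k : ℕ} {x : Fin k → ℕ} (hx : StrictMono x) (h0 : ∀ i, 1 ≤ x i) (i : Fin k) :
    i.1 + 1 ≤ x i := by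
  rcases Nat.eq_zero_or_pos k with hk | hk
  · exact absurd i.isLt (by omega)
  · have := sm_gap hx i.1 ⟨0, hk⟩ i (by simp)
    have := h0 ⟨0, hk⟩
    omega

/-- cnt of the image of an injective function -/
lemma cnt_image {k : ℕ} {f : Fin k → ℕ} (hf : Function.Injective f) (t : ℕ) :
    cnt (Finset.image f Finset.univ) t = #(univ.filter (fun i => f i ≤ t)) := by
  rw [cnt, Finset.filter_image]
  exact Finset.card_image_of_injective _ hf

lemma card_le_filter {k : ℕ} (i : Fin k) :
    #(univ.filter (fun j : Fin k => j ≤ i)) = i.1 + 1 := by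
  rw [show (univ.filter (fun j : Fin k => j ≤ i)) = Iic i by ext j; simp]
  simp [Fin.card_Iic]


lemma image_oeof {k : ℕ} {S : Finset ℕ} (hc : #S = k) :
    Finset.image (S.orderEmbOfFin hc) Finset.univ = S := by
  apply eq_of_subset_of_card_le
  · intro v hv
    obtain ⟨i, _, rfl⟩ := mem_image.1 hv
    exact S.orderEmbOfFin_mem hc i
  · rw [card_image_of_injective _ (S.orderEmbOfFin hc).injective, card_univ]
    simp [hc]

lemma card_lt_filter {k : ℕ} (i : Fin k) :
    #(univ.filter (fun j : Fin k => j < i)) = i.1 := by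
  rw [show (univ.filter (fun j : Fin k => j < i)) = Iio i by ext j; simp]
  simp [Fin.card_Iio]

section SeqSet

variable {w h : ℕ}

lemma seq_bounds {p : (Fin w → ℕ) × (Fin w → ℕ)} (hp : SeqCond w h p) (i : Fin w) :
    p.1 i ≤ h - 1 ∧ p.2 i ≤ h - 1 := by
  obtain ⟨ha, hb, h0, hl, hab, hst⟩ := hp
  have hlast : p.2 ⟨w - 1, by have := i.isLt; omega⟩ = h - 1 := hl _ rfl
  have : p.2 i ≤ p.2 ⟨w - 1, by have := i.isLt; omega⟩ := hb (by rw [Fin.le_def]; have := i.isLt; simp; omega)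
  have := hab i
  omega

lemma setCond_of_seq (hh : 1 ≤ h) {p : (Fin w → ℕ) × (Fin w → ℕ)} (hp : SeqCond w h p) :
    SetCond (w+h-2) (w-1) (seqX w p.1, seqY w p.2) := by
  obtain ⟨ha, hb, h0, hl, hab, hst⟩ := hp
  have hbd := seq_bounds ⟨ha, hb, h0, hl, hab, hst⟩
  refine ⟨?_, ?_, ?_, ?_, ?_⟩
  · intro v hv
    obtain ⟨i, _, rfl⟩ := mem_image.1 hv
    have h1 := (hbd (fup i)).1
    have h2 := i.isLt
    rw [mem_Icc]
    omega
  · intro v hv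
    obtain ⟨i, _, rfl⟩ := mem_image.1 hv
    have h1 := (hbd (fdn i)).2
    have h2 := i.isLt
    rw [mem_Icc]
    omega
  · rw [seqX, card_image_of_injective _ (seqX_strictMono ha).injective, card_univ]
    simp
  · rw [seqY, card_image_of_injective _ (seqY_strictMono hb).injective, card_univ]
    simp
  · intro t
    rw [seqX, seqY, cnt_image (seqX_strictMono ha).injective,
      cnt_image (seqY_strictMono hb).injective]
    apply card_le_card
    intro i hi
    simp only [mem_filter, mem_univ, true_and] at hi ⊢
    have : p.1 (fup i) ≤ p.2 (fdn i) := hst (fdn i) (fup i) rfl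
    omega

lemma seq_inj {p p' : (Fin w → ℕ) × (Fin w → ℕ)} (hp : SeqCond w h p) (hp' : SeqCond w h p')
    (hX : seqX w p.1 = seqX w p'.1) (hY : seqY w p.2 = seqY w p'.2) : p = p' := by
  obtain ⟨ha, hb, h0, hl, hab, hst⟩ := hp
  obtain ⟨ha', hb', h0', hl', hab', hst'⟩ := hp'
  have hcX : #(seqX w p.1) = w - 1 := by
    rw [seqX, card_image_of_injective _ (seqX_strictMono ha).injective, card_univ]; simp
  have hcY : #(seqY w p.2) = w - 1 := by
    rw [seqY, card_image_of_injective _ (seqY_strictMono hb).injective, card_univ]; simp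
  have e1 : (fun i : Fin (w-1) => p.1 (fup i) + i.1 + 1) = (seqX w p.1).orderEmbOfFin hcX :=
    Finset.orderEmbOfFin_unique hcX (fun i => mem_image_of_mem _ (mem_univ i)) (seqX_strictMono ha)
  have e1' : (fun i : Fin (w-1) => p'.1 (fup i) + i.1 + 1) = (seqX w p.1).orderEmbOfFin hcX := by
    apply Finset.orderEmbOfFin_unique hcX (fun i => ?_) (seqX_strictMono ha')
    rw [hX]; exact mem_image_of_mem _ (mem_univ i)
  have e2 : (fun i : Fin (w-1) => p.2 (fdn i) + i.1 + 1) = (seqY w p.2).orderEmbOfFin hcY :=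
    Finset.orderEmbOfFin_unique hcY (fun i => mem_image_of_mem _ (mem_univ i)) (seqY_strictMono hb)
  have e2' : (fun i : Fin (w-1) => p'.2 (fdn i) + i.1 + 1) = (seqY w p.2).orderEmbOfFin hcY := by
    apply Finset.orderEmbOfFin_unique hcY (fun i => ?_) (seqY_strictMono hb')
    rw [hY]; exact mem_image_of_mem _ (mem_univ i)
  have hXf : ∀ i : Fin (w-1), p.1 (fup i) = p'.1 (fup i) := by
    intro i
    have := congrFun (e1.trans e1'.symm) i
    simpa using this
  have hYf : ∀ i : Fin (w-1), p.2 (fdn i) = p'.2 (fdn i) := by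
    intro i
    have := congrFun (e2.trans e2'.symm) i
    simpa using this
  have hfa : p.1 = p'.1 := by
    funext j
    rcases Nat.eq_zero_or_pos j.1 with hj | hj
    · rw [h0 j hj, h0' j hj]
    · have hjlt := j.isLt
      have : j = fup ⟨j.1 - 1, by omega⟩ := by rw [Fin.ext_iff]; simp [fup]; omega
      rw [this]; exact hXf _
  have hfb : p.2 = p'.2 := by
    funext j
    rcases Nat.lt_or_ge j.1 (w-1) with hj | hj
    · have : j = fdn ⟨j.1, hj⟩ := by rw [Fin.ext_iff]; simp [fdn]
      rw [this]; exact hYf _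
    · have hjlt := j.isLt
      have hje : j.1 = w - 1 := by omega
      rw [hl j hje, hl' j hje]
  exact Prod.ext hfa hfb


lemma seq_surj (hw : 1 ≤ w) (hh : 1 ≤ h) {q : Finset ℕ × Finset ℕ}
    (hq : SetCond (w+h-2) (w-1) q) :
    ∃ p : (Fin w → ℕ) × (Fin w → ℕ), SeqCond w h p ∧ (seqX w p.1, seqY w p.2) = q := by
  obtain ⟨hX1, hY1, hcX, hcY, hdom⟩ := hq
  have hxsm : StrictMono (q.1.orderEmbOfFin hcX) := (q.1.orderEmbOfFin hcX).strictMono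
  have hysm : StrictMono (q.2.orderEmbOfFin hcY) := (q.2.orderEmbOfFin hcY).strictMono
  have hxmem : ∀ i, 1 ≤ q.1.orderEmbOfFin hcX i ∧ q.1.orderEmbOfFin hcX i ≤ w+h-2 :=
    fun i => mem_Icc.1 (hX1 (q.1.orderEmbOfFin_mem hcX i))
  have hymem : ∀ i, 1 ≤ q.2.orderEmbOfFin hcY i ∧ q.2.orderEmbOfFin hcY i ≤ w+h-2 :=
    fun i => mem_Icc.1 (hY1 (q.2.orderEmbOfFin_mem hcY i))
  have hcntX : ∀ t, cnt q.1 t = #(univ.filter (fun j : Fin (w-1) => q.1.orderEmbOfFin hcX j ≤ t)) := by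
    intro t
    conv_lhs => rw [← image_oeof hcX]
    exact cnt_image hxsm.injective t
  have hcntY : ∀ t, cnt q.2 t = #(univ.filter (fun j : Fin (w-1) => q.2.orderEmbOfFin hcY j ≤ t)) := by
    intro t
    conv_lhs => rw [← image_oeof hcY]
    exact cnt_image hysm.injective t
  have hxy : ∀ i : Fin (w-1), q.1.orderEmbOfFin hcX i ≤ q.2.orderEmbOfFin hcY i := by
    intro i
    by_contra hcon
    push_neg at hcon
    have h1 : (i.1 + 1) ≤ cnt q.2 (q.2.orderEmbOfFin hcY i) := by
      rw [hcntY]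
      calc i.1 + 1 = #(univ.filter (fun j : Fin (w-1) => j ≤ i)) := (card_le_filter i).symm
        _ ≤ _ := card_le_card (by
              intro j hj
              simp only [mem_filter, mem_univ, true_and] at hj ⊢
              exact hysm.monotone hj)
    have h2 : cnt q.1 (q.2.orderEmbOfFin hcY i) ≤ i.1 := by
      rw [hcntX]
      calc _ ≤ #(univ.filter (fun j : Fin (w-1) => j < i)) := card_le_card (by
              intro j hj
              simp only [mem_filter, mem_univ, true_and] at hj ⊢
              exact hxsm.lt_iff_lt.1 (lt_of_le_of_lt hj hcon))
        _ = i.1 := card_lt_filter i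
    have := hdom (q.2.orderEmbOfFin hcY i)
    omega
  -- total extensions
  set x' : ℕ → ℕ := fun n => if hn : n < w - 1 then q.1.orderEmbOfFin hcX ⟨n, hn⟩ else 0 with hx'def
  set y' : ℕ → ℕ := fun n => if hn : n < w - 1 then q.2.orderEmbOfFin hcY ⟨n, hn⟩ else 0 with hy'def
  have hx' : ∀ (n) (hn : n < w - 1), x' n = q.1.orderEmbOfFin hcX ⟨n, hn⟩ := by
    intro n hn; rw [hx'def]; exact dif_pos hn
  have hy' : ∀ (n) (hn : n < w - 1), y' n = q.2.orderEmbOfFin hcY ⟨n, hn⟩ := by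
    intro n hn; rw [hy'def]; exact dif_pos hn
  have hgapx : ∀ (m n : ℕ) (hm : m < w-1) (hn : n < w-1), m ≤ n → x' m + (n - m) ≤ x' n := by
    intro m n hm hn hmn
    rw [hx' m hm, hx' n hn]
    exact sm_gap hxsm (n - m) ⟨m, hm⟩ ⟨n, hn⟩ (by simp only []; omega)
  have hgapy : ∀ (m n : ℕ) (hm : m < w-1) (hn : n < w-1), m ≤ n → y' m + (n - m) ≤ y' n := by
    intro m n hm hn hmn
    rw [hy' m hm, hy' n hn]
    exact sm_gap hysm (n - m) ⟨m, hm⟩ ⟨n, hn⟩ (by simp only []; omega)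
  have hxlb : ∀ (n) (hn : n < w-1), n + 1 ≤ x' n := by
    intro n hn
    rw [hx' n hn]
    exact sm_lb hxsm (fun i => (hxmem i).1) ⟨n, hn⟩
  have hylb : ∀ (n) (hn : n < w-1), n + 1 ≤ y' n := by
    intro n hn
    rw [hy' n hn]
    exact sm_lb hysm (fun i => (hymem i).1) ⟨n, hn⟩
  have hxub : ∀ (n) (hn : n < w-1), x' n + (w - 2 - n) ≤ w+h-2 := by
    intro n hn
    have h2 : w - 2 < w - 1 := by omega
    have hg := hgapx n (w-2) hn h2 (by omega)
    have hub : x' (w-2) ≤ w+h-2 := by rw [hx' (w-2) h2]; exact (hxmem ⟨w-2, h2⟩).2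
    omega
  have hyub : ∀ (n) (hn : n < w-1), y' n + (w - 2 - n) ≤ w+h-2 := by
    intro n hn
    have h2 : w - 2 < w - 1 := by omega
    have hg := hgapy n (w-2) hn h2 (by omega)
    have hub : y' (w-2) ≤ w+h-2 := by rw [hy' (w-2) h2]; exact (hymem ⟨w-2, h2⟩).2
    omega
  have hxy' : ∀ (n) (hn : n < w-1), x' n ≤ y' n := by
    intro n hn
    rw [hx' n hn, hy' n hn]
    exact hxy ⟨n, hn⟩
  -- the sequences
  set a : Fin w → ℕ := fun j => if j.1 = 0 then 0 else x' (j.1 - 1) - j.1 with hadef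
  set b : Fin w → ℕ := fun j => if j.1 = w - 1 then h - 1 else y' j.1 - (j.1 + 1) with hbdef
  have haval0 : ∀ j : Fin w, j.1 = 0 → a j = 0 := by
    intro j hj; rw [hadef]; simp only [hj]; rfl
  have haval : ∀ j : Fin w, ¬ j.1 = 0 → a j = x' (j.1 - 1) - j.1 := by
    intro j hj; rw [hadef]; simp only [if_neg hj]
  have hbval1 : ∀ j : Fin w, j.1 = w - 1 → b j = h - 1 := by
    intro j hj; rw [hbdef]; simp only [if_pos hj]
  have hbval : ∀ j : Fin w, ¬ j.1 = w - 1 → b j = y' j.1 - (j.1 + 1) := by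
    intro j hj; rw [hbdef]; simp only [if_neg hj]
  refine ⟨(a, b), ⟨?_, ?_, fun i hi => haval0 i hi, fun i hi => hbval1 i hi, ?_, ?_⟩, ?_⟩
  · -- Monotone a
    intro j j' hjj
    show a j ≤ a j'
    have hjj' : j.1 ≤ j'.1 := hjj
    by_cases hj : j.1 = 0
    · rw [haval0 j hj]; exact Nat.zero_le _
    · have hj' : ¬ j'.1 = 0 := by omega
      rw [haval j hj, haval j' hj']
      have hlt : j.1 - 1 < w - 1 := by have := j.isLt; omega
      have hlt' : j'.1 - 1 < w - 1 := by have := j'.isLt; omega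
      have := hgapx (j.1-1) (j'.1-1) hlt hlt' (by omega)
      have := hxlb (j.1-1) hlt
      omega
  · -- Monotone b
    intro j j' hjj
    show b j ≤ b j'
    have hjj' : j.1 ≤ j'.1 := hjj
    by_cases hj' : j'.1 = w - 1
    · rw [hbval1 j' hj']
      by_cases hj : j.1 = w - 1
      · rw [hbval1 j hj]
      · rw [hbval j hj]
        have hlt : j.1 < w - 1 := by have := j.isLt; omega
        have := hyub j.1 hlt
        omega
    · have hj : ¬ j.1 = w - 1 := by have := j'.isLt; omega
      rw [hbval j hj, hbval j' hj']
      have hlt : j.1 < w - 1 := by have := j.isLt; omega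
      have hlt' : j'.1 < w - 1 := by have := j'.isLt; omega
      have := hgapy j.1 j'.1 hlt hlt' (by omega)
      have := hylb j.1 hlt
      omega
  · -- a i ≤ b i
    intro j
    show a j ≤ b j
    by_cases hj : j.1 = 0
    · rw [haval0 j hj]; exact Nat.zero_le _
    · rw [haval j hj]
      by_cases hj' : j.1 = w - 1
      · rw [hbval1 j hj']
        have hlt : j.1 - 1 < w - 1 := by have := j.isLt; omega
        have := hxub (j.1-1) hlt
        omega
      · rw [hbval j hj']
        have hlt : j.1 - 1 < w - 1 := by have := j.isLt; omega
        have hlt2 : j.1 < w - 1 := by have := j.isLt; omega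
        have h1 := hgapx (j.1-1) j.1 hlt hlt2 (by omega)
        have h2 := hxy' j.1 hlt2
        have := hxlb (j.1-1) hlt
        omega
  · -- stagger
    intro i j hij
    show a j ≤ b i
    have hj : ¬ j.1 = 0 := by omega
    have hi' : ¬ i.1 = w - 1 := by have := j.isLt; omega
    rw [haval j hj, hbval i hi']
    have hlt : i.1 < w - 1 := by have := j.isLt; omega
    have := hxy' i.1 hlt
    have he2 : j.1 - 1 = i.1 := by omega
    rw [he2, hij]
    exact Nat.sub_le_sub_right this _
  · -- roundtrip
    show (seqX w a, seqY w b) = q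
    have hXim : (fun i : Fin (w-1) => a (fup i) + i.1 + 1) = q.1.orderEmbOfFin hcX := by
      funext i
      have hne : ¬ (fup i).1 = 0 := by simp [fup]
      rw [haval (fup i) hne]
      have h1 : (fup i).1 = i.1 + 1 := rfl
      rw [h1]
      have h2 : i.1 + 1 - 1 = i.1 := by omega
      rw [h2, hx' i.1 i.isLt]
      have h3 : (⟨i.1, i.isLt⟩ : Fin (w-1)) = i := Fin.eta i i.isLt
      rw [h3]
      have := sm_lb hxsm (fun i => (hxmem i).1) i
      omega
    have hYim : (fun i : Fin (w-1) => b (fdn i) + i.1 + 1) = q.2.orderEmbOfFin hcY := by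
      funext i
      have hne : ¬ (fdn i).1 = w - 1 := by have := i.isLt; simp [fdn]; omega
      rw [hbval (fdn i) hne]
      have h1 : (fdn i).1 = i.1 := rfl
      rw [h1, hy' i.1 i.isLt]
      have h3 : (⟨i.1, i.isLt⟩ : Fin (w-1)) = i := Fin.eta i i.isLt
      rw [h3]
      have := sm_lb hysm (fun i => (hymem i).1) i
      omega
    have hXq : seqX w a = q.1 := by
      show Finset.image (fun i : Fin (w-1) => a (fup i) + i.1 + 1) Finset.univ = q.1
      rw [hXim, image_oeof hcX]
    have hYq : seqY w b = q.2 := by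
      show Finset.image (fun i : Fin (w-1) => b (fdn i) + i.1 + 1) Finset.univ = q.2
      rw [hYim, image_oeof hcY]
    rw [hXq, hYq]

end SeqSet


/-! ### Polyominoes -/

section Poly

lemma cellAdj_symm {x y : ℤ × ℤ} (h : CellAdj x y) : CellAdj y x := by
  unfold CellAdj at *
  omega

lemma adj_cases {e f : ℤ × ℤ} (h : CellAdj e f) :
    (f.1 = e.1 + 1 ∧ f.2 = e.2) ∨ (f.1 = e.1 - 1 ∧ f.2 = e.2) ∨
    (f.1 = e.1 ∧ f.2 = e.2 + 1) ∨ (f.1 = e.1 ∧ f.2 = e.2 - 1) := by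
  unfold CellAdj at h
  omega

variable {P : Finset (ℤ × ℤ)}

/-- cut lemma: a path from inside Q to outside Q crosses the boundary -/
lemma cut_lemma {c d : ℤ × ℤ} (Q : ℤ × ℤ → Prop)
    (hpath : Relation.ReflTransGen (fun x y => x ∈ P ∧ y ∈ P ∧ CellAdj x y) c d)
    (hQc : Q c) (hQd : ¬ Q d) :
    ∃ e f : ℤ × ℤ, e ∈ P ∧ f ∈ P ∧ CellAdj e f ∧ Q e ∧ ¬ Q f := by
  induction hpath with
  | refl => exact absurd hQc hQd
  | tail hp hstep ih =>
    rename_i e d'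
    by_cases hQe : Q e
    · exact ⟨e, d', hstep.1, hstep.2.1, hstep.2.2, hQe, hQd⟩
    · exact ih hQe

/-- intermediate column: a path passes through every column between its endpoints -/
lemma intermediate_col {c d : ℤ × ℤ} (hc : c ∈ P)
    (hpath : Relation.ReflTransGen (fun x y => x ∈ P ∧ y ∈ P ∧ CellAdj x y) c d) :
    ∀ u : ℤ, c.1 ≤ u → u ≤ d.1 → ∃ e ∈ P, e.1 = u := by
  induction hpath with
  | refl => exact fun u h1 h2 => ⟨c, hc, le_antisymm h2 h1 ▸ rfl⟩
  | tail hp hstep ih =>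
    rename_i e d'
    intro u h1 h2
    rcases le_or_gt u e.1 with hle | hlt
    · exact ih u h1 hle
    · refine ⟨d', hstep.2.1, ?_⟩
      have := adj_cases hstep.2.2
      omega

end Poly

section Build

/-- construct a polyomino from column data -/
def buildP (w : ℕ) (a b : Fin w → ℕ) : Finset (ℤ × ℤ) :=
  (Finset.univ : Finset (Fin w)).biUnion
    (fun i => (Finset.Icc (a i) (b i)).image (fun j : ℕ => ((i.1 : ℤ), (j : ℤ))))

lemma mem_buildP {w : ℕ} {a b : Fin w → ℕ} {c : ℤ × ℤ} :
    c ∈ buildP w a b ↔ ∃ (i : Fin w) (j : ℕ), a i ≤ j ∧ j ≤ b i ∧ c = ((i.1 : ℤ), (j : ℤ)) := by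
  simp only [buildP, mem_biUnion, mem_univ, true_and, mem_image, mem_Icc]
  constructor
  · rintro ⟨i, j, ⟨hj1, hj2⟩, rfl⟩
    exact ⟨i, j, hj1, hj2, rfl⟩
  · rintro ⟨i, j, hj1, hj2, rfl⟩
    exact ⟨i, j, ⟨hj1, hj2⟩, rfl⟩

lemma mem_buildP_nat {w : ℕ} {a b : Fin w → ℕ} {i : Fin w} {j : ℕ} :
    ((i.1 : ℤ), (j : ℤ)) ∈ buildP w a b ↔ (a i ≤ j ∧ j ≤ b i) := by
  rw [mem_buildP]
  constructor
  · rintro ⟨i', j', h1, h2, heq⟩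
    have hii : i = i' := Fin.ext (by
      have := congrArg Prod.fst heq
      simp at this
      omega)
    have hjj : j = j' := by
      have := congrArg Prod.snd heq
      simp at this
      omega
    subst hii; subst hjj
    exact ⟨h1, h2⟩
  · intro ⟨h1, h2⟩
    exact ⟨i, j, h1, h2, rfl⟩

variable {w h : ℕ}

lemma seq_b_le {p : (Fin w → ℕ) × (Fin w → ℕ)} (hp : SeqCond w h p) (i : Fin w) :
    p.2 i ≤ h - 1 := (seq_bounds hp i).2

lemma build_conn {a b : Fin w → ℕ} (hp : SeqCond w h ⟨a, b⟩) :
    ∀ (n : ℕ) (i : Fin w) (j : ℕ), i.1 + j = n → a i ≤ j → j ≤ b i →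
      Relation.ReflTransGen
        (fun x y => x ∈ buildP w a b ∧ y ∈ buildP w a b ∧ CellAdj x y)
        ((i.1 : ℤ), (j : ℤ)) ((0 : ℤ), (0 : ℤ)) := by
  obtain ⟨ha, hb, h0, hl, hab, hst⟩ := hp
  intro n
  induction n using Nat.strong_induction_on with
  | _ n ih =>
    intro i j hn hja hjb
    rcases Nat.lt_or_ge (a i) j with hlt | hge
    · -- step down
      have hj1 : 1 ≤ j := by omega
      have hm1 : ((i.1 : ℤ), ((j - 1 : ℕ) : ℤ)) ∈ buildP w a b :=
        mem_buildP_nat.2 ⟨by omega, by omega⟩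
      have hm0 : ((i.1 : ℤ), (j : ℤ)) ∈ buildP w a b := mem_buildP_nat.2 ⟨hja, hjb⟩
      refine Relation.ReflTransGen.head ⟨hm0, hm1, ?_⟩ (ih (n-1) (by omega) i (j-1) (by omega) (by omega) (by omega))
      unfold CellAdj
      simp only []
      omega
    · -- j = a i
      have hj : j = a i := by omega
      rcases Nat.eq_zero_or_pos i.1 with hi0 | hipos
      · -- at origin
        have hia : a i = 0 := h0 i hi0
        have hj0 : j = 0 := by omega
        have : ((i.1 : ℤ), (j : ℤ)) = ((0:ℤ), (0:ℤ)) := by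
          rw [hi0, hj0]
          simp
        rw [this]
      · -- step left
        have hi' : i.1 - 1 < w := by have := i.isLt; omega
        set i' : Fin w := ⟨i.1 - 1, hi'⟩ with hi'def
        have hstep : a i ≤ b i' := hst i' i (by rw [hi'def]; simp; omega)
        have hai' : a i' ≤ j := by
          have : a i' ≤ a i := ha (by rw [Fin.le_def, hi'def]; simp)
          omega
        have hbi' : j ≤ b i' := by omega
        have hm1 : ((i'.1 : ℤ), (j : ℤ)) ∈ buildP w a b := mem_buildP_nat.2 ⟨hai', hbi'⟩
        have hm0 : ((i.1 : ℤ), (j : ℤ)) ∈ buildP w a b := mem_buildP_nat.2 ⟨hja, hjb⟩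
        refine Relation.ReflTransGen.head ⟨hm0, hm1, ?_⟩ (ih (n-1) (by omega) i' j (by rw [hi'def]; simp; omega) hai' hbi')
        unfold CellAdj
        simp only [hi'def]
        omega

lemma build_isPara (hw : 1 ≤ w) (hh : 1 ≤ h) {a b : Fin w → ℕ}
    (hp' : SeqCond w h (a, b)) : IsParallelogramPolyomino w h (buildP w a b) := by
  obtain ⟨ha, hb, h0, hl, hab, hst⟩ := hp'
  have hp' : SeqCond w h (a, b) := ⟨ha, hb, h0, hl, hab, hst⟩
  have hble : ∀ i, b i ≤ h - 1 := seq_b_le hp'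
  have hfin0 : (0 : ℕ) < w := hw
  have hm00 : ((0:ℤ), (0:ℤ)) ∈ buildP w a b := by
    have hm := mem_buildP_nat (a := a) (b := b) (i := ⟨0, hfin0⟩) (j := 0)
    have hcast : ((((⟨0, hfin0⟩ : Fin w)).1 : ℤ), ((0:ℕ) : ℤ)) = ((0:ℤ), (0:ℤ)) := by
      simp
    rw [← hcast]
    exact hm.2 ⟨le_of_eq (h0 ⟨0, hfin0⟩ rfl), Nat.zero_le _⟩
  have hfinl : w - 1 < w := by omega
  have hmwh : ((w:ℤ) - 1, (h:ℤ) - 1) ∈ buildP w a b := by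
    have hblast : b ⟨w-1, hfinl⟩ = h - 1 := hl _ rfl
    have halast : a ⟨w-1, hfinl⟩ ≤ h - 1 := le_trans (hab _) (le_of_eq hblast)
    have hm := mem_buildP_nat (a := a) (b := b) (i := ⟨w-1, hfinl⟩) (j := h-1)
    have hcast : ((((⟨w-1, hfinl⟩ : Fin w)).1 : ℤ), ((h-1 : ℕ) : ℤ)) = ((w:ℤ)-1, (h:ℤ)-1) := by
      rw [Prod.ext_iff]
      refine ⟨?_, ?_⟩ <;> · simp only []; omega
    rw [← hcast]
    exact hm.2 ⟨halast, le_of_eq hblast.symm⟩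
  have hpathz : ∀ c ∈ buildP w a b,
      Relation.ReflTransGen (fun x y => x ∈ buildP w a b ∧ y ∈ buildP w a b ∧ CellAdj x y)
        c ((0:ℤ), (0:ℤ)) := by
    intro c hc
    obtain ⟨i, j, h1, h2, rfl⟩ := mem_buildP.1 hc
    exact build_conn hp' _ i j rfl h1 h2
  have hsym : Symmetric (fun x y => x ∈ buildP w a b ∧ y ∈ buildP w a b ∧ CellAdj x y) :=
    fun x y hxy => ⟨hxy.2.1, hxy.1, cellAdj_symm hxy.2.2⟩
  refine ⟨⟨⟨⟨((0:ℤ),(0:ℤ)), hm00⟩, ?_⟩, ⟨?_, ?_⟩, ?_, ⟨_, hm00, rfl⟩, ⟨_, hmwh, rfl⟩,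
    ⟨_, hm00, rfl⟩, ⟨_, hmwh, rfl⟩⟩, hm00, hmwh⟩
  · -- connectivity
    intro c hc d hd
    exact (hpathz c hc).trans ((@Relation.ReflTransGen.stdSymm _ _ ⟨fun x y hxy => hsym hxy⟩).symm _ _ (hpathz d hd))
  · -- row convexity
    intro i1 i2 i3 j hi12 hi23 h1 h3
    obtain ⟨u1, j1, ha1, hb1, heq1⟩ := mem_buildP.1 h1
    obtain ⟨u3, j3, ha3, hb3, heq3⟩ := mem_buildP.1 h3
    have e11 : i1 = (u1.1 : ℤ) := congrArg Prod.fst heq1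
    have e12 : j = (j1 : ℤ) := congrArg Prod.snd heq1
    have e31 : i3 = (u3.1 : ℤ) := congrArg Prod.fst heq3
    have e32 : j = (j3 : ℤ) := congrArg Prod.snd heq3
    have hu3lt := u3.isLt
    have hi2lt : i2.toNat < w := by omega
    set i2' : Fin w := ⟨i2.toNat, hi2lt⟩ with hi2'def
    have hji : j1 = j3 := by omega
    have hmono1 : a i2' ≤ a u3 := ha (by rw [Fin.le_def, hi2'def]; simp only []; omega)
    have hmono2 : b u1 ≤ b i2' := hb (by rw [Fin.le_def, hi2'def]; simp only []; omega)
    have : ((i2'.1 : ℤ), (j1 : ℤ)) ∈ buildP w a b := mem_buildP_nat.2 ⟨by omega, by omega⟩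
    have hcast : ((i2'.1 : ℤ), (j1 : ℤ)) = (i2, j) := by
      rw [Prod.ext_iff]
      refine ⟨?_, ?_⟩ <;> · simp only [hi2'def]; omega
    rwa [hcast] at this
  · -- column convexity
    intro j1 j2 j3 i hj12 hj23 h1 h3
    obtain ⟨u1, n1, ha1, hb1, heq1⟩ := mem_buildP.1 h1
    obtain ⟨u3, n3, ha3, hb3, heq3⟩ := mem_buildP.1 h3
    have e11 : i = (u1.1 : ℤ) := congrArg Prod.fst heq1
    have e12 : j1 = (n1 : ℤ) := congrArg Prod.snd heq1
    have e31 : i = (u3.1 : ℤ) := congrArg Prod.fst heq3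
    have e32 : j3 = (n3 : ℤ) := congrArg Prod.snd heq3
    have huu : u1 = u3 := Fin.ext (by omega)
    subst huu
    have : ((u1.1 : ℤ), ((j2.toNat : ℕ) : ℤ)) ∈ buildP w a b := mem_buildP_nat.2 ⟨by omega, by omega⟩
    have hcast : ((u1.1 : ℤ), ((j2.toNat : ℕ) : ℤ)) = (i, j2) := by
      rw [Prod.ext_iff]
      refine ⟨?_, ?_⟩ <;> · simp only []; omega
    rwa [hcast] at this
  · -- bounds
    intro c hc
    obtain ⟨i, j, h1, h2, rfl⟩ := mem_buildP.1 hc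
    have := i.isLt
    have := hble i
    refine ⟨by simp, ?_, by simp, ?_⟩ <;> · simp only []; omega


lemma mono_of_adj {f : Fin w → ℕ} (hadj : ∀ i i' : Fin w, i'.1 = i.1 + 1 → f i ≤ f i') :
    Monotone f := by
  have key : ∀ (d : ℕ) (i j : Fin w), i.1 + d = j.1 → f i ≤ f j := by
    intro d
    induction d with
    | zero => intro i j he; have : i = j := Fin.ext (by omega); rw [this]
    | succ d ih =>
      intro i j he
      have hlt : i.1 + d < w := by have := j.isLt; omega
      exact le_trans (ih i ⟨i.1 + d, hlt⟩ (by simp)) (hadj ⟨i.1 + d, hlt⟩ j (by simp only []; omega))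
  intro i j hij
  exact key (j.1 - i.1) i j (by have : i.1 ≤ j.1 := hij; omega)

lemma build_inj {p p' : (Fin w → ℕ) × (Fin w → ℕ)} (hp : SeqCond w h p) (hp' : SeqCond w h p')
    (heq : buildP w p.1 p.2 = buildP w p'.1 p'.2) : p = p' := by
  obtain ⟨a, b⟩ := p
  obtain ⟨a', b'⟩ := p'
  have hab : ∀ i, a i ≤ b i := hp.2.2.2.2.1
  have hab' : ∀ i, a' i ≤ b' i := hp'.2.2.2.2.1
  have key : ∀ (c c' d d' : Fin w → ℕ), (∀ i, c i ≤ d i) →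
      buildP w c d = buildP w c' d' → ∀ i, c' i ≤ c i ∧ d i ≤ d' i := by
    intro c c' d d' hcd he i
    have h1 : ((i.1:ℤ), (c i : ℤ)) ∈ buildP w c' d' := by
      rw [← he]; exact mem_buildP_nat.2 ⟨le_rfl, hcd i⟩
    have h2 : ((i.1:ℤ), (d i : ℤ)) ∈ buildP w c' d' := by
      rw [← he]; exact mem_buildP_nat.2 ⟨hcd i, le_rfl⟩
    exact ⟨(mem_buildP_nat.1 h1).1, (mem_buildP_nat.1 h2).2⟩
  have k1 := key a a' b b' hab heq
  have k2 := key a' a b' b hab' heq.symm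
  refine Prod.ext (funext fun i => le_antisymm ?_ ?_) (funext fun i => le_antisymm ?_ ?_)
  · exact (k2 i).1
  · exact (k1 i).1
  · exact (k1 i).2
  · exact (k2 i).2

lemma build_surj (hw : 1 ≤ w) (hh : 1 ≤ h) {P : Finset (ℤ × ℤ)}
    (hP : IsParallelogramPolyomino w h P) :
    ∃ p : (Fin w → ℕ) × (Fin w → ℕ), SeqCond w h p ∧ buildP w p.1 p.2 = P := by
  obtain ⟨⟨⟨hne, hconn⟩, ⟨hrow, hcol⟩, hbnd, -, -, -, -⟩, h00, hwh⟩ := hP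
  have hpath0 : Relation.ReflTransGen (fun x y => x ∈ P ∧ y ∈ P ∧ CellAdj x y)
      ((0:ℤ),(0:ℤ)) ((w:ℤ)-1, (h:ℤ)-1) := hconn _ h00 _ hwh
  -- columns are nonempty
  set colC : Fin w → Finset ℕ :=
    fun i => (P.filter (fun c => c.1 = (i.1:ℤ))).image (fun c => c.2.toNat) with hcolC
  have hmemcol : ∀ (i : Fin w) (v : ℕ), v ∈ colC i ↔ ((i.1:ℤ), (v:ℤ)) ∈ P := by
    intro i v
    rw [hcolC]
    simp only [mem_image, mem_filter]
    constructor
    · rintro ⟨c, ⟨hcP, hc1⟩, hv⟩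
      have hb := hbnd c hcP
      have : ((i.1:ℤ), (v:ℤ)) = c := by
        rw [Prod.ext_iff]
        refine ⟨?_, ?_⟩ <;> · simp only []; omega
      rwa [this]
    · intro hv
      exact ⟨((i.1:ℤ), (v:ℤ)), ⟨hv, rfl⟩, by simp⟩
  have hneC : ∀ i : Fin w, (colC i).Nonempty := by
    intro i
    have hwgt := i.isLt
    obtain ⟨e, heP, he1⟩ := intermediate_col h00 hpath0 (i.1:ℤ) (by simp) (by simp only []; omega)
    have hb := hbnd e heP
    refine ⟨e.2.toNat, (hmemcol i e.2.toNat).2 ?_⟩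
    have : ((i.1:ℤ), (e.2.toNat:ℤ)) = e := by
      rw [Prod.ext_iff]
      refine ⟨?_, ?_⟩ <;> · simp only []; omega
    rwa [this]
  set a : Fin w → ℕ := fun i => (colC i).min' (hneC i) with hadef
  set b : Fin w → ℕ := fun i => (colC i).max' (hneC i) with hbdef
  have hchar : ∀ (i : Fin w) (v : ℕ), ((i.1:ℤ), (v:ℤ)) ∈ P ↔ (a i ≤ v ∧ v ≤ b i) := by
    intro i v
    constructor
    · intro hv
      rw [← hmemcol] at hv
      exact ⟨Finset.min'_le _ _ hv, Finset.le_max' _ _ hv⟩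
    · rintro ⟨h1, h2⟩
      have hma : a i ∈ colC i := Finset.min'_mem _ _
      have hmb : b i ∈ colC i := Finset.max'_mem _ _
      rw [hmemcol] at hma hmb
      exact hcol (a i : ℤ) (v : ℤ) (b i : ℤ) (i.1 : ℤ) (by omega) (by omega) hma hmb
  have hmemP : ∀ (i : Fin w), ((i.1:ℤ), (a i : ℤ)) ∈ P ∧ ((i.1:ℤ), (b i : ℤ)) ∈ P := by
    intro i
    exact ⟨(hchar i (a i)).2 ⟨le_rfl, Finset.min'_le _ _ (Finset.max'_mem _ _)⟩,
      (hchar i (b i)).2 ⟨Finset.min'_le _ _ (Finset.max'_mem _ _), le_rfl⟩⟩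
  have hab : ∀ i, a i ≤ b i := fun i => Finset.min'_le _ _ (Finset.max'_mem _ _)
  have hble : ∀ i, b i ≤ h - 1 := by
    intro i
    have := hbnd _ (hmemP i).2
    simp only [] at this
    omega
  have ha0 : ∀ i : Fin w, i.1 = 0 → a i = 0 := by
    intro i hi
    have h0mem : ((i.1:ℤ), ((0:ℕ):ℤ)) ∈ P := by
      have : ((i.1:ℤ), ((0:ℕ):ℤ)) = ((0:ℤ),(0:ℤ)) := by
        rw [Prod.ext_iff]
        refine ⟨?_, ?_⟩ <;> · simp only []; omega
      rw [this]; exact h00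
    have := (hchar i 0).1 h0mem
    omega
  have hblast : ∀ i : Fin w, i.1 = w - 1 → b i = h - 1 := by
    intro i hi
    have hmem : ((i.1:ℤ), ((h-1:ℕ):ℤ)) ∈ P := by
      have : ((i.1:ℤ), ((h-1:ℕ):ℤ)) = ((w:ℤ)-1, (h:ℤ)-1) := by
        rw [Prod.ext_iff]
        refine ⟨?_, ?_⟩ <;> · simp only []; omega
      rw [this]; exact hwh
    have h1 := (hchar i (h-1)).1 hmem
    have := hble i
    omega
  have hstag : ∀ i i' : Fin w, i'.1 = i.1 + 1 → a i' ≤ b i := by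
    intro i i' hii
    have hi'lt := i'.isLt
    obtain ⟨e, f, heP, hfP, hadj, hQe, hQf⟩ := cut_lemma (fun c => c.1 ≤ (i.1:ℤ)) hpath0
      (by simp) (by simp only []; push_neg; omega)
    push_neg at hQf
    have hbe := hbnd e heP
    have hbf := hbnd f hfP
    rcases adj_cases hadj with ⟨hf1, hf2⟩ | ⟨hf1, hf2⟩ | ⟨hf1, hf2⟩ | ⟨hf1, hf2⟩
    · -- f right of e : crossing
      have he1 : e.1 = (i.1:ℤ) := by omega
      have hf1' : f.1 = (i'.1:ℤ) := by omega
      have heme : ((i.1:ℤ), (e.2.toNat:ℤ)) ∈ P := by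
        have : ((i.1:ℤ), (e.2.toNat:ℤ)) = e := by
          rw [Prod.ext_iff]; refine ⟨?_, ?_⟩ <;> · simp only []; omega
        rwa [this]
      have hemf : ((i'.1:ℤ), (e.2.toNat:ℤ)) ∈ P := by
        have : ((i'.1:ℤ), (e.2.toNat:ℤ)) = f := by
          rw [Prod.ext_iff]; refine ⟨?_, ?_⟩ <;> · simp only []; omega
        rwa [this]
      have c1 := (hchar i e.2.toNat).1 heme
      have c2 := (hchar i' e.2.toNat).1 hemf
      omega
    · omega
    · omega
    · omega
  have hamono : ∀ i i' : Fin w, i'.1 = i.1 + 1 → a i ≤ a i' := by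
    intro i i' hii
    by_contra hcon
    push_neg at hcon
    have hi'lt := i'.isLt
    have himem : ((i'.1:ℤ), (a i' : ℤ)) ∈ P := (hmemP i').1
    obtain ⟨e, f, heP, hfP, hadj, hQe, hQf⟩ := cut_lemma
      (fun c => c.1 ≤ (i.1:ℤ) ∧ c.2 ≤ (a i' : ℤ)) (hconn _ h00 _ himem)
      (by constructor <;> simp) (by simp only []; push_neg; intro; omega)
    have hbe := hbnd e heP
    have hbf := hbnd f hfP
    obtain ⟨hQe1, hQe2⟩ := hQe
    rcases adj_cases hadj with ⟨hf1, hf2⟩ | ⟨hf1, hf2⟩ | ⟨hf1, hf2⟩ | ⟨hf1, hf2⟩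
    · -- f right of e
      have he1 : e.1 = (i.1:ℤ) := by
        by_contra hc
        exact hQf ⟨by omega, by omega⟩
      have heme : ((i.1:ℤ), (e.2.toNat:ℤ)) ∈ P := by
        have : ((i.1:ℤ), (e.2.toNat:ℤ)) = e := by
          rw [Prod.ext_iff]; refine ⟨?_, ?_⟩ <;> · simp only []; omega
        rwa [this]
      have c1 := (hchar i e.2.toNat).1 heme
      omega
    · exact hQf ⟨by omega, by omega⟩
    · -- f above e
      have he2 : e.2 = (a i' : ℤ) := by
        by_contra hc
        exact hQf ⟨by omega, by omega⟩
      -- e = (e.1, a i') with e.1 ≤ i ; use row convexity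
      have hmid : ((i.1:ℤ), (a i' : ℤ)) ∈ P := by
        apply hrow e.1 (i.1:ℤ) (i'.1:ℤ) (a i' : ℤ) (by omega) (by omega)
        · have : (e.1, (a i' : ℤ)) = e := by
            rw [Prod.ext_iff]; exact ⟨rfl, by omega⟩
          rwa [this]
        · exact himem
      have c1 := (hchar i (a i')).1 hmid
      omega
    · exact hQf ⟨by omega, by omega⟩
  have hbmono : ∀ i i' : Fin w, i'.1 = i.1 + 1 → b i ≤ b i' := by
    intro i i' hii
    by_contra hcon
    push_neg at hcon
    have hi'lt := i'.isLt
    have himem : ((i.1:ℤ), (b i : ℤ)) ∈ P := (hmemP i).2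
    rcases Nat.lt_or_ge (b i) (h - 1) with hlt | hge
    · -- b i < h - 1 : cut argument
      obtain ⟨e, f, heP, hfP, hadj, hQe, hQf⟩ := cut_lemma
        (fun c => c.1 ≤ (i.1:ℤ) ∨ c.2 ≤ (b i : ℤ)) (hconn _ himem _ hwh)
        (Or.inl (by simp)) (by simp only []; push_neg; omega)
      push_neg at hQf
      obtain ⟨hQf1, hQf2⟩ := hQf
      have hbe := hbnd e heP
      have hbf := hbnd f hfP
      rcases adj_cases hadj with ⟨hf1, hf2⟩ | ⟨hf1, hf2⟩ | ⟨hf1, hf2⟩ | ⟨hf1, hf2⟩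
      · -- f right of e : e.1 = i, e.2 > b i
        have he1 : e.1 = (i.1:ℤ) := by
          rcases hQe with hq | hq
          · omega
          · omega
        have heme : ((i.1:ℤ), (e.2.toNat:ℤ)) ∈ P := by
          have : ((i.1:ℤ), (e.2.toNat:ℤ)) = e := by
            rw [Prod.ext_iff]; refine ⟨?_, ?_⟩ <;> · simp only []; omega
          rwa [this]
        have c1 := (hchar i e.2.toNat).1 heme
        omega
      · rcases hQe with hq | hq <;> omega
      · -- f above e : e.2 = b i, e.1 > i ; row convexity
        have he2 : e.2 = (b i : ℤ) := by
          rcases hQe with hq | hq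
          · omega
          · omega
        have he1 : (i'.1 : ℤ) ≤ e.1 := by
          rcases hQe with hq | hq
          · omega
          · omega
        have hmid : ((i'.1:ℤ), (b i : ℤ)) ∈ P := by
          apply hrow (i.1:ℤ) (i'.1:ℤ) e.1 (b i : ℤ) (by omega) (by omega) himem
          have : (e.1, (b i : ℤ)) = e := by
            rw [Prod.ext_iff]; exact ⟨rfl, by omega⟩
          rwa [this]
        have c1 := (hchar i' (b i)).1 hmid
        omega
      · rcases hQe with hq | hq <;> omega
    · -- b i = h - 1 : direct row convexity with the top-right cell
      have hbi : b i = h - 1 := by have := hble i; omega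
      have hmid : ((i'.1:ℤ), (b i : ℤ)) ∈ P := by
        apply hrow (i.1:ℤ) (i'.1:ℤ) ((w:ℤ)-1) (b i : ℤ) (by omega) (by omega) himem
        have : ((w:ℤ)-1, (b i : ℤ)) = ((w:ℤ)-1, (h:ℤ)-1) := by
          rw [Prod.ext_iff]; exact ⟨rfl, by omega⟩
        rwa [this]
      have c1 := (hchar i' (b i)).1 hmid
      omega
  refine ⟨(a, b), ⟨mono_of_adj (fun i i' hii => hamono i i' hii),
    mono_of_adj (fun i i' hii => hbmono i i' hii), ha0, hblast, hab,
    fun i j hij => hstag i j hij⟩, ?_⟩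
  apply Finset.ext
  intro c
  rw [mem_buildP]
  constructor
  · rintro ⟨i, j, h1, h2, rfl⟩
    exact (hchar i j).2 ⟨h1, h2⟩
  · intro hc
    have hb := hbnd c hc
    have hilt : c.1.toNat < w := by omega
    refine ⟨⟨c.1.toNat, hilt⟩, c.2.toNat, ?_, ?_, ?_⟩
    · refine ((hchar ⟨c.1.toNat, hilt⟩ c.2.toNat).1 ?_).1
      have : (((⟨c.1.toNat, hilt⟩ : Fin w).1 : ℤ), (c.2.toNat : ℤ)) = c := by
        rw [Prod.ext_iff]; refine ⟨?_, ?_⟩ <;> · simp only []; omega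
      rwa [this]
    · refine ((hchar ⟨c.1.toNat, hilt⟩ c.2.toNat).1 ?_).2
      have : (((⟨c.1.toNat, hilt⟩ : Fin w).1 : ℤ), (c.2.toNat : ℤ)) = c := by
        rw [Prod.ext_iff]; refine ⟨?_, ?_⟩ <;> · simp only []; omega
      rwa [this]
    · rw [Prod.ext_iff]; refine ⟨?_, ?_⟩ <;> · simp only []; omega

end Build


section Assemble

variable {w h : ℕ}

lemma natCard_seq_eq_set (hw : 1 ≤ w) (hh : 1 ≤ h) :
    Nat.card {p : (Fin w → ℕ) × (Fin w → ℕ) // SeqCond w h p} =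
    Nat.card {q : Finset ℕ × Finset ℕ // SetCond (w+h-2) (w-1) q} := by
  apply Nat.card_eq_of_bijective
    (f := fun p => ⟨(seqX w p.1.1, seqY w p.1.2), setCond_of_seq hh p.2⟩)
  constructor
  · rintro ⟨p, hp⟩ ⟨p', hp'⟩ hpp
    simp only [Subtype.mk.injEq, Prod.mk.injEq] at hpp
    exact Subtype.ext (seq_inj hp hp' hpp.1 hpp.2)
  · rintro ⟨q, hq⟩
    obtain ⟨p, hp, hpq⟩ := seq_surj hw hh hq
    exact ⟨⟨p, hp⟩, Subtype.ext hpq⟩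

lemma natCard_poly (hw : 1 ≤ w) (hh : 1 ≤ h) :
    Nat.card {P : Finset (ℤ × ℤ) // IsParallelogramPolyomino w h P} =
    Nat.card {p : (Fin w → ℕ) × (Fin w → ℕ) // SeqCond w h p} := by
  symm
  apply Nat.card_eq_of_bijective
    (f := fun p => ⟨buildP w p.1.1 p.1.2, build_isPara hw hh p.2⟩)
  constructor
  · rintro ⟨p, hp⟩ ⟨p', hp'⟩ hpp
    simp only [Subtype.mk.injEq] at hpp
    exact Subtype.ext (build_inj hp hp' hpp)
  · rintro ⟨P, hP⟩
    obtain ⟨p, hp, hpP⟩ := build_surj hw hh hP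
    exact ⟨⟨p, hp⟩, Subtype.ext hpP⟩

end Assemble

end PPoly

/-- The number `B` of parallelogram polyominoes of width `w ≥ 1` and height
`h ≥ 1` satisfies `(s-1)·B = C(s-1, w)·C(s-1, h)`, where `s = w + h`;
that is, `B` is the Narayana number. -/
theorem parallelogram_polyomino_count (w h s : ℕ) (hw : 1 ≤ w) (hh : 1 ≤ h)
    (hs : s = w + h) :
    (s - 1) * Nat.card {P : Finset (ℤ × ℤ) // IsParallelogramPolyomino w h P} =
      Nat.choose (s - 1) w * Nat.choose (s - 1) h := by
  subst hs
  have hcard : Nat.card {P : Finset (ℤ × ℤ) // IsParallelogramPolyomino w h P} =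
      (PPoly.goodF (w+h-2) (w-1)).card := by
    rw [PPoly.natCard_poly hw hh, PPoly.natCard_seq_eq_set hw hh, PPoly.natCard_setCond]
  rw [hcard, show w + h - 1 = (w + h - 2) + 1 from by omega]
  rcases Nat.lt_or_ge w 2 with hw1 | hw2
  · have hw1' : w = 1 := by omega
    subst hw1'
    rw [show (1:ℕ) - 1 = 0 from rfl, PPoly.card_goodF_zero, mul_one,
      Nat.choose_one_right, show 1 + h - 2 + 1 = h from by omega, Nat.choose_self, mul_one]
  · have hk : 1 ≤ w - 1 := by omega
    have hgf := PPoly.card_goodF (w+h-2) (w-1) hk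
    rw [show w - 1 + 1 = w from by omega] at hgf
    rw [hgf]
    congr 1
    have hsym := Nat.choose_symm (show h ≤ (w+h-2)+1 by omega)
    rw [show (w+h-2)+1 - h = w - 1 from by omega] at hsym
    exact hsym
end

section
/- Let p, q, u, v ∈ ℤ², and for points x, y let N_x^y denote the number of monotone lattice paths from x to y. Suppose that there is no non-intersecting pair consisting of a monotone lattice path from p to v and a monotone lattice path from q to u. Then the number of intersecting pairs (U, V), where U is a monotone lattice path from p to u and V is a monotone lattice path from q to v, equals N_p^v · N_q^u. -/
/-- A monotone lattice path from `p` to `q`: a finite sequence of lattice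
points starting at `p` and ending at `q` in which every step is either
East (add `(1,0)`) or North (add `(0,1)`). -/
def IsMonotonePath (p q : ℤ × ℤ) (L : List (ℤ × ℤ)) : Prop :=
  L.head? = some p ∧ L.getLast? = some q ∧
    L.Chain' (fun a b => b = a + (1, 0) ∨ b = a + (0, 1))

/-- The number of monotone lattice paths from `p` to `q`. -/
noncomputable def numPaths (p q : ℤ × ℤ) : ℕ :=
  Nat.card {L : List (ℤ × ℤ) // IsMonotonePath p q L}

namespace LGVaux

lemma mp_nodup {p q : ℤ × ℤ} {L : List (ℤ × ℤ)} (h : IsMonotonePath p q L) : L.Nodup := by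
  have hlt : L.Chain' (fun a b : ℤ × ℤ => a.1 + a.2 < b.1 + b.2) := by
    refine h.2.2.imp ?_
    rintro a b (rfl | rfl) <;> simp [Prod.fst_add, Prod.snd_add]
  haveI : IsTrans (ℤ × ℤ) (fun a b : ℤ × ℤ => a.1 + a.2 < b.1 + b.2) :=
    ⟨fun _ _ _ h1 h2 => lt_trans h1 h2⟩
  have hp := List.isChain_iff_pairwise.mp hlt
  exact hp.imp (fun hab => by rintro rfl; omega)

lemma chain'_step {α : Type*} {R : α → α → Prop} {L : List α} (h : L.Chain' R) {k : ℕ}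
    (hk : k + 1 < L.length) : R (L[k]'(by omega)) (L[k+1]'hk) := by
  have := List.isChain_iff_getElem.mp h k (by omega)
  simpa using this

lemma getLast?_drop' {α : Type*} {l : List α} {n : ℕ} (h : n < l.length) :
    (l.drop n).getLast? = l.getLast? := by
  have hne : l.drop n ≠ [] := by rw [ne_eq, List.drop_eq_nil_iff]; omega
  obtain ⟨w, hw⟩ := Option.isSome_iff_exists.mp (List.getLast?_isSome.mpr hne)
  conv_rhs => rw [← List.take_append_drop n l]
  rw [List.getLast?_append, hw]; rfl

lemma head?_take' {α : Type*} {l : List α} {i : ℕ} (h0 : 0 < i) :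
    (l.take i).head? = l.head? := by
  rw [List.head?_eq_getElem?, List.head?_eq_getElem?, List.getElem?_take, if_pos h0]

lemma getLast?_take' {α : Type*} {l : List α} {i : ℕ} (h0 : 0 < i) (hi : i ≤ l.length) :
    (l.take i).getLast? = l[i-1]? := by
  rw [List.getLast?_eq_getElem?, List.getElem?_take]
  have h1 : (l.take i).length = i := by simp [List.length_take]; omega
  rw [h1, if_pos (by omega)]

lemma length_take' {α : Type*} {l : List α} {i : ℕ} (hi : i ≤ l.length) :
    (l.take i).length = i := by simp [List.length_take]; omega

/-- crossing two monotone paths at a common point gives a monotone path -/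
lemma path_cross {p u q v x : ℤ × ℤ} {U V : List (ℤ × ℤ)}
    (hU : IsMonotonePath p u U) (hV : IsMonotonePath q v V)
    {i j : ℕ} (hi : i < U.length) (hj : j < V.length)
    (hxi : U[i] = x) (hxj : V[j] = x) :
    IsMonotonePath p v (U.take i ++ V.drop j) := by
  refine ⟨?_, ?_, ?_⟩
  · rcases Nat.eq_zero_or_pos i with h0 | h0
    · subst h0
      rw [List.take_zero, List.nil_append, List.head?_drop,
        List.getElem?_eq_getElem hj, hxj, ← hxi]
      have h1 := hU.1
      rwa [List.head?_eq_getElem?, List.getElem?_eq_getElem (by omega)] at h1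
    · rw [List.head?_append, head?_take' h0, hU.1]; rfl
  · rw [List.getLast?_append, getLast?_drop' hj, hV.2.1]; rfl
  · refine List.isChain_append.mpr ?_
    refine ⟨hU.2.2.take i, hV.2.2.drop j, ?_⟩
    intro a ha b hb
    rcases Nat.eq_zero_or_pos i with h0 | h0
    · subst h0; simp at ha
    · rw [getLast?_take' h0 hi.le, List.getElem?_eq_getElem (by omega)] at ha
      have haa : a = U[i-1]'(by omega) := by simpa [eq_comm] using ha
      rw [List.head?_drop, List.getElem?_eq_getElem hj] at hb
      have hbb : b = V[j] := by simpa [eq_comm] using hb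
      subst haa; subst hbb
      rw [hxj, ← hxi]
      have hst := chain'_step hU.2.2 (k := i-1) (by omega)
      have hii : i - 1 + 1 = i := by omega
      simp only [hii] at hst
      exact hst

lemma core_find {U V : List (ℤ × ℤ)} (hnU : U.Nodup) (hnV : V.Nodup)
    {i j : ℕ} {x : ℤ × ℤ} (hi : i < U.length) (hj : j < V.length)
    (hxi : U[i] = x) (hxj : V[j] = x)
    (hminU : ∀ k (hk : k < i), U[k] ∉ V)
    (hminV : ∀ k (hk : k < j), V[k] ≠ x) :
    (U.take i ++ V.drop j).findIdx (fun a => decide (a ∈ V.take j ++ U.drop i)) = i ∧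
      (V.take j ++ U.drop i).findIdx (fun b => decide (b = x)) = j := by
  have hltU : (U.take i).length = i := length_take' hi.le
  have hltV : (V.take j).length = j := length_take' hj.le
  have hlenA : i < (U.take i ++ V.drop j).length := by
    rw [List.length_append, hltU, List.length_drop]; omega
  have hlenB : j < (V.take j ++ U.drop i).length := by
    rw [List.length_append, hltV, List.length_drop]; omega
  have hdisjU : (U.take i).Disjoint (U.drop i) :=
    (List.nodup_append'.mp (by rw [List.take_append_drop]; exact hnU)).2.2
  have hdisjV : (V.take j).Disjoint (V.drop j) :=
    (List.nodup_append'.mp (by rw [List.take_append_drop]; exact hnV)).2.2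
  have hAi : (U.take i ++ V.drop j)[i]'hlenA = x := by
    rw [List.getElem_append_right (by omega)]
    simp only [hltU, Nat.sub_self]
    rw [List.getElem_drop]
    simpa using hxj
  have hBj : (V.take j ++ U.drop i)[j]'hlenB = x := by
    rw [List.getElem_append_right (by omega)]
    simp only [hltV, Nat.sub_self]
    rw [List.getElem_drop]
    simpa using hxi
  have hxdropU : x ∈ U.drop i := by
    have : (U.drop i)[0]'(by rw [List.length_drop]; omega) = x := by
      rw [List.getElem_drop]; simpa using hxi
    rw [← this]; exact List.getElem_mem _
  have hxdropV : x ∈ V.drop j := by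
    have : (V.drop j)[0]'(by rw [List.length_drop]; omega) = x := by
      rw [List.getElem_drop]; simpa using hxj
    rw [← this]; exact List.getElem_mem _
  constructor
  · rw [List.findIdx_eq hlenA]
    constructor
    · rw [hAi]; simp only [decide_eq_true_eq]
      exact List.mem_append_right _ hxdropU
    · intro k hk
      have hAk : (U.take i ++ V.drop j)[k]'(by omega) = U[k]'(by omega) := by
        rw [List.getElem_append_left (by omega), List.getElem_take]
      rw [hAk]
      simp only [decide_eq_false_iff_not, List.mem_append]
      rintro (hmem | hmem)
      · exact hminU k hk (List.mem_of_mem_take hmem)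
      · refine hdisjU ?_ hmem
        have : (U.take i)[k]'(by omega) = U[k]'(by omega) := List.getElem_take
        rw [← this]; exact List.getElem_mem _
  · rw [List.findIdx_eq hlenB]
    constructor
    · rw [hBj]; simp
    · intro k hk
      have hBk : (V.take j ++ U.drop i)[k]'(by omega) = V[k]'(by omega) := by
        rw [List.getElem_append_left (by omega), List.getElem_take]
      rw [hBk]
      simp only [decide_eq_false_iff_not]
      exact hminV k hk

/-- the tail-swapping map -/
def swapFun (U V : List (ℤ × ℤ)) : List (ℤ × ℤ) × List (ℤ × ℤ) :=
  if h : U.findIdx (fun a => decide (a ∈ V)) < U.length then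
    (U.take (U.findIdx (fun a => decide (a ∈ V))) ++
       V.drop (V.findIdx (fun b => decide (b = U[U.findIdx (fun a => decide (a ∈ V))]'h))),
     V.take (V.findIdx (fun b => decide (b = U[U.findIdx (fun a => decide (a ∈ V))]'h))) ++
       U.drop (U.findIdx (fun a => decide (a ∈ V))))
  else (U, V)

lemma swap_main {p u q v : ℤ × ℤ} {U V : List (ℤ × ℤ)}
    (hU : IsMonotonePath p u U) (hV : IsMonotonePath q v V)
    (hx : ∃ x, x ∈ U ∧ x ∈ V) :
    IsMonotonePath p v (swapFun U V).1 ∧ IsMonotonePath q u (swapFun U V).2 ∧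
      (∃ x, x ∈ (swapFun U V).1 ∧ x ∈ (swapFun U V).2) ∧
      swapFun (swapFun U V).1 (swapFun U V).2 = (U, V) := by
  obtain ⟨x0, hx0U, hx0V⟩ := hx
  have hi : U.findIdx (fun a => decide (a ∈ V)) < U.length :=
    List.findIdx_lt_length_of_exists ⟨x0, hx0U, by simpa using hx0V⟩
  have hxV : U[U.findIdx (fun a => decide (a ∈ V))]'hi ∈ V := by
    have := List.findIdx_getElem (w := hi)
    simpa using this
  -- abbreviations
  generalize hidef : U.findIdx (fun a => decide (a ∈ V)) = i at *
  generalize hxdef : U[i]'hi = x at *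
  have hj : V.findIdx (fun b => decide (b = x)) < V.length :=
    List.findIdx_lt_length_of_exists ⟨x, hxV, by simp⟩
  have hVj : V[V.findIdx (fun b => decide (b = x))]'hj = x := by
    have := List.findIdx_getElem (p := fun b => decide (b = x)) (w := hj)
    simpa using this
  generalize hjdef : V.findIdx (fun b => decide (b = x)) = j at *
  -- minimality
  have hminU : ∀ k (hk : k < i), U[k] ∉ V := by
    intro k hk hmem
    have := List.not_of_lt_findIdx (p := fun a => decide (a ∈ V)) (xs := U)
      (i := k) (by rw [hidef]; exact hk)
    simp at this
    exact this hmem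
  have hminV : ∀ k (hk : k < j), V[k] ≠ x := by
    intro k hk hmem
    have := List.not_of_lt_findIdx (p := fun b => decide (b = x)) (xs := V) (i := k)
      (by rw [hjdef]; exact hk)
    simp at this
    exact this hmem
  have hswapUV : swapFun U V = (U.take i ++ V.drop j, V.take j ++ U.drop i) := by
    unfold swapFun
    simp only [hidef, hxdef, hjdef, dif_pos hi]
  rw [hswapUV]
  have hnU := mp_nodup hU
  have hnV := mp_nodup hV
  have hA : IsMonotonePath p v (U.take i ++ V.drop j) := path_cross hU hV hi hj hxdef hVj
  have hB : IsMonotonePath q u (V.take j ++ U.drop i) := path_cross hV hU hj hi hVj hxdef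
  obtain ⟨hfindA, hidxB⟩ := core_find hnU hnV hi hj hxdef hVj hminU hminV
  have hltU : (U.take i).length = i := length_take' hi.le
  have hltV : (V.take j).length = j := length_take' hj.le
  have hlenA : i < (U.take i ++ V.drop j).length := by
    rw [List.length_append, hltU, List.length_drop]; omega
  have hAi : (U.take i ++ V.drop j)[i]'hlenA = x := by
    rw [List.getElem_append_right (by omega)]
    simp only [hltU, Nat.sub_self]
    rw [List.getElem_drop]
    simpa using hVj
  have hxA : x ∈ U.take i ++ V.drop j := by rw [← hAi]; exact List.getElem_mem _
  have hxB : x ∈ V.take j ++ U.drop i := by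
    refine List.mem_append_right _ ?_
    have h0 : (U.drop i)[0]'(by rw [List.length_drop]; omega) = x := by
      rw [List.getElem_drop]; simpa using hxdef
    rw [← h0]; exact List.getElem_mem _
  refine ⟨hA, hB, ⟨x, hxA, hxB⟩, ?_⟩
  -- swapping back
  unfold swapFun
  rw [dif_pos (by rw [hfindA]; exact hlenA)]
  have hgetA : ∀ (hh : ((U.take i ++ V.drop j).findIdx
      (fun a => decide (a ∈ V.take j ++ U.drop i))) < (U.take i ++ V.drop j).length),
      (U.take i ++ V.drop j)[(U.take i ++ V.drop j).findIdx
        (fun a => decide (a ∈ V.take j ++ U.drop i))]'hh = x := by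
    intro hh
    simp only [hfindA] at hh ⊢
    exact hAi
  simp only [hfindA, hAi, hidxB, hgetA]
  rw [List.take_left' hltU, List.drop_left' hltV, List.take_left' hltV,
    List.drop_left' hltU, List.take_append_drop, List.take_append_drop]

end LGVaux

/-- Lemma 1, Eq. (4): if there is no non-intersecting pair of monotone paths
from `p` to `v` and from `q` to `u` (i.e., every such pair of paths has a
common point), then the number of intersecting pairs `(U, V)` with `U` a
monotone path from `p` to `u` and `V` a monotone path from `q` to `v`
equals `N_p^v · N_q^u`. -/
theorem intersecting_pairs_count (p q u v : ℤ × ℤ)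
    (hno : ∀ A B : List (ℤ × ℤ), IsMonotonePath p v A → IsMonotonePath q u B →
      ∃ x, x ∈ A ∧ x ∈ B) :
    Nat.card {UV : List (ℤ × ℤ) × List (ℤ × ℤ) //
        IsMonotonePath p u UV.1 ∧ IsMonotonePath q v UV.2 ∧
          ∃ x, x ∈ UV.1 ∧ x ∈ UV.2} =
      numPaths p v * numPaths q u := by
  have e : {UV : List (ℤ × ℤ) × List (ℤ × ℤ) //
        IsMonotonePath p u UV.1 ∧ IsMonotonePath q v UV.2 ∧
          ∃ x, x ∈ UV.1 ∧ x ∈ UV.2} ≃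
      {AB : List (ℤ × ℤ) × List (ℤ × ℤ) //
        IsMonotonePath p v AB.1 ∧ IsMonotonePath q u AB.2} :=
    { toFun := fun s =>
        ⟨LGVaux.swapFun s.1.1 s.1.2,
          (LGVaux.swap_main s.2.1 s.2.2.1 s.2.2.2).1,
          (LGVaux.swap_main s.2.1 s.2.2.1 s.2.2.2).2.1⟩
      invFun := fun s =>
        ⟨LGVaux.swapFun s.1.1 s.1.2,
          (LGVaux.swap_main s.2.1 s.2.2 (hno _ _ s.2.1 s.2.2)).1,
          (LGVaux.swap_main s.2.1 s.2.2 (hno _ _ s.2.1 s.2.2)).2.1,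
          (LGVaux.swap_main s.2.1 s.2.2 (hno _ _ s.2.1 s.2.2)).2.2.1⟩
      left_inv := fun s => Subtype.ext <| by
        have h := (LGVaux.swap_main s.2.1 s.2.2.1 s.2.2.2).2.2.2
        simpa using h
      right_inv := fun s => Subtype.ext <| by
        have h := (LGVaux.swap_main s.2.1 s.2.2 (hno _ _ s.2.1 s.2.2)).2.2.2
        simpa using h }
  rw [Nat.card_congr e, Nat.card_congr (Equiv.subtypeProdEquivProd), Nat.card_prod]
  rfl
end

section
/- Let p, q, u, v ∈ ℤ², and for points x, y let N_x^y denote the number of monotone lattice paths from x to y. Suppose that there is no non-intersecting pair consisting of a monotone lattice path from p to v and a monotone lattice path from q to u. Then the number X̄ of non-intersecting pairs (U, V), where U is a monotone lattice path from p to u and V is a monotone lattice path from q to v, satisfies X̄ + N_p^v · N_q^u = N_p^u · N_q^v; that is, X̄ = N_p^u·N_q^v − N_p^v·N_q^u. -/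
namespace LGV

abbrev Pt : Type := ℤ × ℤ

abbrev MStep (a b : Pt) : Prop := b = a + (1, 0) ∨ b = a + (0, 1)

def wt (x : Pt) : ℤ := x.1 + x.2

lemma wt_step {a b : Pt} (h : MStep a b) : wt b = wt a + 1 := by
  rcases h with h | h <;> subst h <;>
    simp [wt, Prod.fst_add, Prod.snd_add] <;> ring

lemma isMonotonePath_iff {p q : Pt} {L : List Pt} :
    IsMonotonePath p q L ↔
      L.head? = some p ∧ L.getLast? = some q ∧ L.Chain' MStep := Iff.rfl

lemma wt_getElem {L : List Pt} {p : Pt} (hc : L.Chain' MStep) (hh : L.head? = some p)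
    {i : ℕ} (hi : i < L.length) : wt L[i] = wt p + i := by
  induction i with
  | zero =>
    cases L with
    | nil => simp at hh
    | cons a t =>
      simp only [List.head?_cons, Option.some.injEq] at hh
      subst hh; simp
  | succ n ih =>
    have hn : n < L.length := by omega
    have hstep := List.isChain_iff_getElem.mp hc n (by omega)
    have hw : wt (L[n+1]) = wt (L[n]) + 1 :=
      wt_step (by simpa [List.get_eq_getElem] using hstep)
    rw [hw, ih hn]; push_cast; ring

lemma getElem_inj {L : List Pt} {p : Pt} (hc : L.Chain' MStep) (hh : L.head? = some p)
    {i j : ℕ} (hi : i < L.length) (hj : j < L.length) (h : L[i] = L[j]) : i = j := by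
  have h1 := wt_getElem hc hh hi
  have h2 := wt_getElem hc hh hj
  rw [h] at h1; omega

lemma wt_of_mem_drop {L : List Pt} {p : Pt} (hc : L.Chain' MStep) (hh : L.head? = some p)
    {n : ℕ} {x : Pt} (h : x ∈ L.drop n) : wt p + n ≤ wt x := by
  obtain ⟨m, hm, hx⟩ := List.mem_iff_getElem.mp h
  have hm' : n + m < L.length := by
    simp only [List.length_drop] at hm; omega
  have hx' : x = L[n + m] := by
    rw [← hx]; simp [List.getElem_drop]
  subst hx'
  have := wt_getElem hc hh hm'
  rw [this]; omega

lemma wt_of_mem {L : List Pt} {p : Pt} (hc : L.Chain' MStep) (hh : L.head? = some p)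
    {x : Pt} (h : x ∈ L) : wt p ≤ wt x := by
  simpa using wt_of_mem_drop hc hh (n := 0) (by simpa using h)

/-- `c` is a common point of `U` and `V` of minimal weight. -/
def FirstCommon (U V : List Pt) (c : Pt) : Prop :=
  c ∈ U ∧ c ∈ V ∧ ∀ x, x ∈ U → x ∈ V → wt c ≤ wt x

lemma exists_firstCommon {U V : List Pt} {p : Pt}
    (hc : U.Chain' MStep) (hh : U.head? = some p)
    (hx : ∃ x, x ∈ U ∧ x ∈ V) : ∃ c, FirstCommon U V c := by
  classical
  obtain ⟨x, hxU, hxV⟩ := hx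
  obtain ⟨i0, hi0, hxi⟩ := List.mem_iff_getElem.mp hxU
  have hP : ∃ i, ∃ (hi : i < U.length), U[i] ∈ V := ⟨i0, hi0, hxi ▸ hxV⟩
  obtain ⟨hk, hkV⟩ := Nat.find_spec hP
  refine ⟨U[Nat.find hP], List.getElem_mem _, hkV, ?_⟩
  intro y hyU hyV
  obtain ⟨m, hm, hym⟩ := List.mem_iff_getElem.mp hyU
  have hle : Nat.find hP ≤ m := Nat.find_min' hP ⟨hm, hym ▸ hyV⟩
  have h1 := wt_getElem hc hh hk
  have h2 := wt_getElem hc hh hm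
  rw [hym] at h2
  omega

lemma firstCommon_unique {U V : List Pt} {p : Pt}
    (hc : U.Chain' MStep) (hh : U.head? = some p) {c c' : Pt}
    (h : FirstCommon U V c) (h' : FirstCommon U V c') : c = c' := by
  obtain ⟨hcU, hcV, hmin⟩ := h
  obtain ⟨hcU', hcV', hmin'⟩ := h'
  obtain ⟨i, hi, rfl⟩ := List.mem_iff_getElem.mp hcU
  obtain ⟨j, hj, rfl⟩ := List.mem_iff_getElem.mp hcU'
  have h1 := hmin _ hcU' hcV'
  have h2 := hmin' _ hcU hcV
  have w1 := wt_getElem hc hh hi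
  have w2 := wt_getElem hc hh hj
  have : i = j := by omega
  subst this; rfl

lemma head?_append_left {l₁ l₂ : List Pt} (h : l₁ ≠ []) :
    (l₁ ++ l₂).head? = l₁.head? := by
  cases l₁ with
  | nil => simp at h
  | cons a t => simp

lemma getLast?_take_succ {L : List Pt} {i : ℕ} (hi : i < L.length) :
    (L.take (i+1)).getLast? = some L[i] := by
  have hlen : (L.take (i+1)).length = i + 1 := by
    simp [List.length_take]; omega
  have h1 : i < (L.take (i+1)).length := by omega
  rw [List.getLast?_eq_getElem?, hlen]
  simp only [Nat.add_sub_cancel]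
  rw [List.getElem?_eq_getElem h1, List.getElem_take]

lemma getLast?_drop_of_ne_nil {L : List Pt} {n : ℕ} (h : L.drop n ≠ []) :
    (L.drop n).getLast? = L.getLast? := by
  conv_rhs => rw [← List.take_append_drop n L]
  rw [List.getLast?_append_of_ne_nil _ h]

/-- The splicing lemma: gluing the initial part of `U` (up to a common point)
with the final part of `V` (after that common point) yields a monotone path. -/
lemma splice_path {p u q v : Pt} {U V : List Pt}
    (hU : IsMonotonePath p u U) (hV : IsMonotonePath q v V)
    {i j : ℕ} (hi : i < U.length) (hj : j < V.length)
    (heq : U[i] = V[j]) :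
    IsMonotonePath p v (U.take (i+1) ++ V.drop (j+1)) := by
  obtain ⟨hU1, hU2, hU3⟩ := hU
  obtain ⟨hV1, hV2, hV3⟩ := hV
  have hUne : U ≠ [] := by intro h; subst h; simp at hU1
  have htne : U.take (i+1) ≠ [] := by
    apply List.ne_nil_of_length_pos
    rw [List.length_take]
    omega
  refine ⟨?_, ?_, ?_⟩
  · rw [head?_append_left htne]
    cases U with
    | nil => simp at hU1
    | cons a t => simpa using hU1
  · by_cases hd : V.drop (j+1) = []
    · have hjlen : j + 1 = V.length := by
        have := congrArg List.length hd
        simp [List.length_drop] at this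
        omega
      have hv : V[j] = v := by
        rw [List.getLast?_eq_getElem?] at hV2
        have : V.length - 1 = j := by omega
        rw [this, List.getElem?_eq_getElem hj] at hV2
        simpa using hV2
      rw [hd, List.append_nil, getLast?_take_succ hi, heq, hv]
    · rw [List.getLast?_append_of_ne_nil _ hd, getLast?_drop_of_ne_nil hd]
      exact hV2
  · show List.IsChain _ _
    rw [List.isChain_append]
    refine ⟨(show List.IsChain _ U from hU3).take _, (show List.IsChain _ V from hV3).drop _, ?_⟩
    intro x hx y hy
    rw [getLast?_take_succ hi] at hx
    simp only [Option.mem_def, Option.some.injEq] at hx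
    subst hx
    rw [List.head?_drop] at hy
    simp only [Option.mem_def] at hy
    obtain ⟨hjj, rfl⟩ := List.getElem?_eq_some_iff.mp hy
    have hstep := List.isChain_iff_getElem.mp hV3 j (by omega)
    rw [heq]
    simpa [List.get_eq_getElem] using hstep

/-- Data describing where to perform the swap: a pair of indices pointing to
the first (minimal-weight) common point. -/
def SwapData (U V : List Pt) (t : ℕ × ℕ) : Prop :=
  ∃ (hi : t.1 < U.length) (hj : t.2 < V.length),
    U[t.1] = V[t.2] ∧ FirstCommon U V (U[t.1])

open Classical in
noncomputable def swapFun (U V : List Pt) : List Pt × List Pt :=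
  if h : ∃ t, SwapData U V t then
    (U.take ((Classical.choose h).1 + 1) ++ V.drop ((Classical.choose h).2 + 1),
     V.take ((Classical.choose h).2 + 1) ++ U.drop ((Classical.choose h).1 + 1))
  else (U, V)

lemma exists_swapData {U V : List Pt} {p : Pt}
    (hc : U.Chain' MStep) (hh : U.head? = some p)
    (hx : ∃ x, x ∈ U ∧ x ∈ V) : ∃ t, SwapData U V t := by
  obtain ⟨c, hfc⟩ := exists_firstCommon hc hh hx
  obtain ⟨i, hi, hic⟩ := List.mem_iff_getElem.mp hfc.1
  obtain ⟨j, hj, hjc⟩ := List.mem_iff_getElem.mp hfc.2.1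
  exact ⟨(i, j), hi, hj, by rw [hic, hjc], by rw [hic]; exact hfc⟩

lemma swapData_unique {U V : List Pt} {p q : Pt}
    (hcU : U.Chain' MStep) (hhU : U.head? = some p)
    (hcV : V.Chain' MStep) (hhV : V.head? = some q)
    {t t' : ℕ × ℕ} (h : SwapData U V t) (h' : SwapData U V t') : t = t' := by
  obtain ⟨hi, hj, heq, hfc⟩ := h
  obtain ⟨hi', hj', heq', hfc'⟩ := h'
  have hcc : U[t.1] = U[t'.1] := firstCommon_unique hcU hhU hfc hfc'
  have h1 : t.1 = t'.1 := getElem_inj hcU hhU hi hi' hcc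
  have h2 : t.2 = t'.2 := by
    refine getElem_inj hcV hhV hj hj' ?_
    rw [← heq, ← heq', hcc]
  exact Prod.ext h1 h2

/-- Main properties of the swap at the first common point. -/
lemma swap_spec {p u q v : Pt} {U V : List Pt}
    (hU : IsMonotonePath p u U) (hV : IsMonotonePath q v V)
    {i j : ℕ} (hi : i < U.length) (hj : j < V.length)
    (heq : U[i] = V[j]) (hfc : FirstCommon U V (U[i])) :
    IsMonotonePath p v (U.take (i+1) ++ V.drop (j+1)) ∧
    IsMonotonePath q u (V.take (j+1) ++ U.drop (i+1)) ∧
    SwapData (U.take (i+1) ++ V.drop (j+1)) (V.take (j+1) ++ U.drop (i+1)) (i, j) ∧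
    (U.take (i+1) ++ V.drop (j+1)).take (i+1) ++ (V.take (j+1) ++ U.drop (i+1)).drop (j+1) = U ∧
    (V.take (j+1) ++ U.drop (i+1)).take (j+1) ++ (U.take (i+1) ++ V.drop (j+1)).drop (i+1) = V := by
  have hUt : (U.take (i+1)).length = i + 1 := by simp [List.length_take]; omega
  have hVt : (V.take (j+1)).length = j + 1 := by simp [List.length_take]; omega
  have hiA : i < (U.take (i+1) ++ V.drop (j+1)).length := by
    rw [List.length_append, hUt]; omega
  have hjB : j < (V.take (j+1) ++ U.drop (i+1)).length := by
    rw [List.length_append, hVt]; omega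
  have hAi : (U.take (i+1) ++ V.drop (j+1))[i]'hiA = U[i] := by
    rw [List.getElem_append_left (by omega : i < (U.take (i+1)).length),
      List.getElem_take]
  have hBj : (V.take (j+1) ++ U.drop (i+1))[j]'hjB = V[j] := by
    rw [List.getElem_append_left (by omega : j < (V.take (j+1)).length),
      List.getElem_take]
  have hPA : IsMonotonePath p v (U.take (i+1) ++ V.drop (j+1)) := splice_path hU hV hi hj heq
  have hPB : IsMonotonePath q u (V.take (j+1) ++ U.drop (i+1)) := splice_path hV hU hj hi heq.symm
  refine ⟨hPA, hPB, ?_, ?_, ?_⟩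
  · -- SwapData A B (i, j)
    refine ⟨hiA, hjB, by rw [hAi, hBj, heq], ?_⟩
    rw [hAi]
    have hwc : wt U[i] = wt p + i := wt_getElem hU.2.2 hU.1 hi
    have hwc' : wt U[i] = wt q + j := by
      rw [heq]; exact wt_getElem hV.2.2 hV.1 hj
    refine ⟨?_, ?_, ?_⟩
    · exact List.mem_iff_getElem.mpr ⟨i, hiA, hAi⟩
    · exact List.mem_iff_getElem.mpr ⟨j, hjB, by rw [hBj, ← heq]⟩
    · intro x hxA hxB
      rcases List.mem_append.mp hxA with hx1 | hx1
      · rcases List.mem_append.mp hxB with hx2 | hx2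
        · exact hfc.2.2 x (List.take_subset _ _ hx1) (List.take_subset _ _ hx2)
        · have := wt_of_mem_drop hU.2.2 hU.1 hx2
          omega
      · have := wt_of_mem_drop hV.2.2 hV.1 hx1
        omega
  · -- A.take (i+1) ++ B.drop (j+1) = U
    have e1 : (U.take (i+1) ++ V.drop (j+1)).take (i+1) = U.take (i+1) := by
      rw [List.take_append_of_le_length (by omega), List.take_take]
      simp
    have e2 : (V.take (j+1) ++ U.drop (i+1)).drop (j+1) = U.drop (i+1) := by
      rw [List.drop_append_of_le_length (by omega)]
      simp [List.drop_take]
    rw [e1, e2, List.take_append_drop]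
  · have e1 : (V.take (j+1) ++ U.drop (i+1)).take (j+1) = V.take (j+1) := by
      rw [List.take_append_of_le_length (by omega), List.take_take]
      simp
    have e2 : (U.take (i+1) ++ V.drop (j+1)).drop (i+1) = V.drop (j+1) := by
      rw [List.drop_append_of_le_length (by omega)]
      simp [List.drop_take]
    rw [e1, e2, List.take_append_drop]

/-- The swap map is a well-defined involution between intersecting pairs. -/
lemma swapFun_spec {p u q v : Pt} {U V : List Pt}
    (hU : IsMonotonePath p u U) (hV : IsMonotonePath q v V)
    (hx : ∃ x, x ∈ U ∧ x ∈ V) :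
    IsMonotonePath p v (swapFun U V).1 ∧ IsMonotonePath q u (swapFun U V).2 ∧
    (∃ x, x ∈ (swapFun U V).1 ∧ x ∈ (swapFun U V).2) ∧
    swapFun (swapFun U V).1 (swapFun U V).2 = (U, V) := by
  have h : ∃ t, SwapData U V t := exists_swapData hU.2.2 hU.1 hx
  have hd : swapFun U V =
      (U.take ((Classical.choose h).1 + 1) ++ V.drop ((Classical.choose h).2 + 1),
       V.take ((Classical.choose h).2 + 1) ++ U.drop ((Classical.choose h).1 + 1)) := by
    rw [swapFun, dif_pos h]
  obtain ⟨hi, hj, heq, hfc⟩ := Classical.choose_spec h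
  set i := (Classical.choose h).1
  set j := (Classical.choose h).2
  obtain ⟨hPA, hPB, hSD, hrec1, hrec2⟩ := swap_spec hU hV hi hj heq hfc
  set A := U.take (i+1) ++ V.drop (j+1) with hA
  set B := V.take (j+1) ++ U.drop (i+1) with hB
  rw [hd]
  refine ⟨hPA, hPB, ?_, ?_⟩
  · obtain ⟨hiA, hjB, heq', hfc'⟩ := hSD
    refine ⟨_, List.getElem_mem hiA, ?_⟩
    rw [heq']
    exact List.getElem_mem hjB
  · have h2 : ∃ t, SwapData A B t := ⟨(i, j), hSD⟩
    have hd2 : swapFun A B =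
        (A.take ((Classical.choose h2).1 + 1) ++ B.drop ((Classical.choose h2).2 + 1),
         B.take ((Classical.choose h2).2 + 1) ++ A.drop ((Classical.choose h2).1 + 1)) := by
      rw [swapFun, dif_pos h2]
    have huniq : Classical.choose h2 = (i, j) :=
      swapData_unique hPA.2.2 hPA.1 hPB.2.2 hPB.1 (Classical.choose_spec h2) hSD
    rw [hd2, huniq]
    exact Prod.ext hrec1 hrec2

def stepsOf : List Pt → List Bool
  | [] => []
  | [_] => []
  | a :: b :: t => decide (b = a + (1, 0)) :: stepsOf (b :: t)

lemma length_stepsOf : ∀ L : List Pt, (stepsOf L).length = L.length - 1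
  | [] => rfl
  | [_] => rfl
  | a :: b :: t => by
    simp only [stepsOf, List.length_cons, length_stepsOf (b :: t)]
    omega

lemma stepsOf_inj : ∀ {L M : List Pt}, L.Chain' MStep → M.Chain' MStep →
    L.head? = M.head? → stepsOf L = stepsOf M → L = M
  | [], [], _, _, _, _ => rfl
  | [], _ :: _, _, _, hh, _ => by simp at hh
  | _ :: _, [], _, _, hh, _ => by simp at hh
  | [_], [_], _, _, hh, _ => by simp_all
  | [_], _ :: _ :: _, _, _, _, hs => by simp [stepsOf] at hs
  | _ :: _ :: _, [_], _, _, _, hs => by simp [stepsOf] at hs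
  | a :: b :: t, a' :: b' :: t', hc, hc', hh, hs => by
    simp only [List.head?_cons, Option.some.injEq] at hh
    subst hh
    simp only [stepsOf, List.cons.injEq] at hs
    obtain ⟨hbit, hrest⟩ := hs
    have h1 : MStep a b := (List.isChain_cons_cons.mp hc).1
    have h2 : MStep a b' := (List.isChain_cons_cons.mp hc').1
    have hbb : b = b' := by
      by_cases hc1 : b = a + (1, 0) <;> by_cases hc2 : b' = a + (1, 0)
      · rw [hc1, hc2]
      · simp [hc1, hc2] at hbit
      · simp [hc1, hc2] at hbit
      · rcases h1 with h | h
        · exact absurd h hc1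
        · rcases h2 with h' | h'
          · exact absurd h' hc2
          · rw [h, h']
    subst hbb
    have := stepsOf_inj (List.isChain_cons_cons.mp hc).2 (List.isChain_cons_cons.mp hc').2 rfl hrest
    rw [this]

lemma length_of_path {a b : Pt} {L : List Pt} (h : IsMonotonePath a b L) :
    L.length = (wt b - wt a).toNat + 1 := by
  obtain ⟨h1, h2, h3⟩ := h
  have hne : L ≠ [] := by intro hL; subst hL; simp at h1
  have hlen : 0 < L.length := List.length_pos_iff.mpr hne
  rw [List.getLast?_eq_getElem?] at h2
  obtain ⟨hh, hbe⟩ := List.getElem?_eq_some_iff.mp h2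
  have hw := wt_getElem h3 h1 hh
  rw [hbe] at hw
  omega

lemma finite_paths (a b : Pt) : Finite {L : List Pt // IsMonotonePath a b L} := by
  have hfin : Finite {l : List Bool // l.length ≤ (wt b - wt a).toNat} :=
    (List.finite_length_le Bool _).to_subtype
  refine Finite.of_injective
    (fun L : {L : List Pt // IsMonotonePath a b L} =>
      (⟨stepsOf L.1, by
        have h1 := length_stepsOf L.1
        have h2 := length_of_path L.2
        omega⟩ : {l : List Bool // l.length ≤ (wt b - wt a).toNat})) ?_
  intro L M hLM
  simp only [Subtype.mk.injEq] at hLM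
  apply Subtype.ext
  exact stepsOf_inj L.2.2.2 M.2.2.2 (by rw [L.2.1, M.2.1]) hLM

end LGV

/-- Lemma 1, Eq. (5): if there is no non-intersecting pair of monotone paths
from `p` to `v` and from `q` to `u`, then the number `X̄` of non-intersecting
pairs `(U, V)` with `U` a monotone path from `p` to `u` and `V` a monotone
path from `q` to `v` satisfies `X̄ + N_p^v·N_q^u = N_p^u·N_q^v`, i.e.
`X̄ = N_p^u·N_q^v − N_p^v·N_q^u`. -/
theorem noncrossing_pairs_count (p q u v : ℤ × ℤ)
    (hno : ∀ A B : List (ℤ × ℤ), IsMonotonePath p v A → IsMonotonePath q u B →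
      ∃ x, x ∈ A ∧ x ∈ B) :
    Nat.card {UV : List (ℤ × ℤ) × List (ℤ × ℤ) //
        IsMonotonePath p u UV.1 ∧ IsMonotonePath q v UV.2 ∧
          ∀ x, ¬(x ∈ UV.1 ∧ x ∈ UV.2)}
      + numPaths p v * numPaths q u =
      numPaths p u * numPaths q v := by
  classical
  have hPU := LGV.finite_paths p u
  have hPV := LGV.finite_paths q v
  have hAV := LGV.finite_paths p v
  have hBU := LGV.finite_paths q u
  -- the set of all pairs
  set P0 : List (ℤ × ℤ) × List (ℤ × ℤ) → Prop :=
    fun UV => IsMonotonePath p u UV.1 ∧ IsMonotonePath q v UV.2 with hP0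
  set Q : List (ℤ × ℤ) × List (ℤ × ℤ) → Prop :=
    fun UV => ∀ x, ¬(x ∈ UV.1 ∧ x ∈ UV.2) with hQ
  have eF : {UV // P0 UV} ≃
      {L : List (ℤ × ℤ) // IsMonotonePath p u L} × {L : List (ℤ × ℤ) // IsMonotonePath q v L} :=
    Equiv.subtypeProdEquivProd
  have hFfin : Finite {UV // P0 UV} := Finite.of_equiv _ eF.symm
  -- target ≃ subtype of F
  have eT : {UV : List (ℤ × ℤ) × List (ℤ × ℤ) //
        IsMonotonePath p u UV.1 ∧ IsMonotonePath q v UV.2 ∧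
          ∀ x, ¬(x ∈ UV.1 ∧ x ∈ UV.2)} ≃ {z : {UV // P0 UV} // Q z.1} := by
    refine (Equiv.subtypeEquivRight (fun UV => ?_)).trans
      (Equiv.subtypeSubtypeEquivSubtypeInter P0 Q).symm
    simp only [hP0, hQ]; tauto
  have eS1 : {UV : List (ℤ × ℤ) × List (ℤ × ℤ) //
        IsMonotonePath p u UV.1 ∧ IsMonotonePath q v UV.2 ∧
          ∃ x, x ∈ UV.1 ∧ x ∈ UV.2} ≃ {z : {UV // P0 UV} // ¬ Q z.1} := by
    refine (Equiv.subtypeEquivRight (fun UV => ?_)).trans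
      (Equiv.subtypeSubtypeEquivSubtypeInter P0 (fun UV => ¬ Q UV)).symm
    simp only [hP0, hQ, not_forall, not_not]; tauto
  -- the swap equivalence
  have e3 : {UV : List (ℤ × ℤ) × List (ℤ × ℤ) //
        IsMonotonePath p u UV.1 ∧ IsMonotonePath q v UV.2 ∧
          ∃ x, x ∈ UV.1 ∧ x ∈ UV.2} ≃
      {AB : List (ℤ × ℤ) × List (ℤ × ℤ) //
        IsMonotonePath p v AB.1 ∧ IsMonotonePath q u AB.2} :=
    { toFun := fun x =>
        ⟨LGV.swapFun x.1.1 x.1.2,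
          (LGV.swapFun_spec x.2.1 x.2.2.1 x.2.2.2).1,
          (LGV.swapFun_spec x.2.1 x.2.2.1 x.2.2.2).2.1⟩
      invFun := fun y =>
        ⟨LGV.swapFun y.1.1 y.1.2,
          (LGV.swapFun_spec y.2.1 y.2.2 (hno _ _ y.2.1 y.2.2)).1,
          (LGV.swapFun_spec y.2.1 y.2.2 (hno _ _ y.2.1 y.2.2)).2.1,
          (LGV.swapFun_spec y.2.1 y.2.2 (hno _ _ y.2.1 y.2.2)).2.2.1⟩
      left_inv := fun x => by
        apply Subtype.ext
        exact (LGV.swapFun_spec x.2.1 x.2.2.1 x.2.2.2).2.2.2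
      right_inv := fun y => by
        apply Subtype.ext
        exact (LGV.swapFun_spec y.2.1 y.2.2 (hno _ _ y.2.1 y.2.2)).2.2.2 }
  have eS2 : {AB : List (ℤ × ℤ) × List (ℤ × ℤ) //
        IsMonotonePath p v AB.1 ∧ IsMonotonePath q u AB.2} ≃
      {L : List (ℤ × ℤ) // IsMonotonePath p v L} × {L : List (ℤ × ℤ) // IsMonotonePath q u L} :=
    Equiv.subtypeProdEquivProd
  have hcard2 : Nat.card {UV : List (ℤ × ℤ) × List (ℤ × ℤ) //
        IsMonotonePath p u UV.1 ∧ IsMonotonePath q v UV.2 ∧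
          ∃ x, x ∈ UV.1 ∧ x ∈ UV.2} = numPaths p v * numPaths q u := by
    rw [Nat.card_congr (e3.trans eS2), Nat.card_prod]
    rfl
  have hcardF : Nat.card {UV // P0 UV} = numPaths p u * numPaths q v := by
    rw [Nat.card_congr eF, Nat.card_prod]
    rfl
  rw [← hcard2, Nat.card_congr eT, Nat.card_congr eS1, ← hcardF,
    ← Nat.card_sum, Nat.card_congr (Equiv.sumCompl (fun z : {UV // P0 UV} => Q z.1))]
end

section
/- Let w, h ≥ 0 be integers and s = w + h. Let 𝒫 be the set of all monotone lattice paths from (0,0) to (w,h), and for U, V ∈ 𝒫 let |U ∩ V| denote the number of lattice points visited by both U and V. Then 2 · Σ_{U ∈ 𝒫} Σ_{V ∈ 𝒫} |U ∩ V| = C(2s+2, 2w+1). -/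
/-- We encode a monotone lattice path from `(0,0)` to `(w,h)` by its sequence
of steps: a function `f : Fin (w+h) → Bool`, where `true` means an East step
and `false` means a North step, with exactly `w` East steps. -/
def pathsFrom0 (w h : ℕ) : Finset (Fin (w + h) → Bool) :=
  Finset.univ.filter fun f => (Finset.univ.filter fun i => f i = true).card = w

/-- The lattice point reached after the first `t` steps of the path `f`. -/
def pathPos (w h : ℕ) (f : Fin (w + h) → Bool) (t : ℕ) : ℕ × ℕ :=
  ((Finset.univ.filter fun i : Fin (w + h) => (i : ℕ) < t ∧ f i = true).card,
   (Finset.univ.filter fun i : Fin (w + h) => (i : ℕ) < t ∧ f i = false).card)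

/-- The set of lattice points visited by the path `f`. -/
def pathPoints (w h : ℕ) (f : Fin (w + h) → Bool) : Finset (ℕ × ℕ) :=
  (Finset.range (w + h + 1)).image (pathPos w h f)

/-- `|U ∩ V|`: the number of lattice points visited by both paths. -/
def interCount (w h : ℕ) (f g : Fin (w + h) → Bool) : ℕ :=
  (pathPoints w h f ∩ pathPoints w h g).card

/-
A point `(k, t - k)` lies on `C(t, k) * C(s - t, w - k)` of the paths, so the double sum counts
pairs of paths through a common point: it is `∑ₜ ∑ₖ (C(t, k) C(s - t, w - k))²`. Letting the two
paths end at different points `(a, s - a)` and `(b, s - b)`, this sum and the truncated Vandermonde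
sum `∑_{j ≤ min a b} C(s + 1, j) C(s + 1, a + b + 1 - j)` obey the same recurrence in `s`
(remove the last step of each path, resp. apply Pascal's rule to both factors), so they agree.
For `a = b = w` the symmetry `j ↦ 2w + 1 - j` shows that twice the truncated sum is the full
Vandermonde sum `C(2s + 2, 2w + 1)`.
-/

open Finset

def intChoose (n : ℕ) (m : ℤ) : ℕ := if 0 ≤ m then n.choose m.toNat else 0

@[simp]
lemma intChoose_natCast (n k : ℕ) : intChoose n k = n.choose k := by
  simp [intChoose]

lemma intChoose_of_neg {n : ℕ} {m : ℤ} (hm : m < 0) : intChoose n m = 0 := by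
  simp [intChoose, not_le.2 hm]

lemma intChoose_of_lt {n : ℕ} {m : ℤ} (hm : (n : ℤ) < m) : intChoose n m = 0 := by
  rw [intChoose, if_pos (by omega), Nat.choose_eq_zero_of_lt (by omega)]

lemma intChoose_zero_left (m : ℤ) : intChoose 0 m = if m = 0 then 1 else 0 := by
  rcases lt_trichotomy m 0 with hm | rfl | hm
  · rw [intChoose_of_neg hm, if_neg hm.ne]
  · rfl
  · rw [intChoose_of_lt (by simpa using hm), if_neg hm.ne']

lemma intChoose_succ (n : ℕ) (m : ℤ) :
    intChoose (n + 1) m = intChoose n m + intChoose n (m - 1) := by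
  rcases lt_trichotomy m 0 with hm | rfl | hm
  · simp [intChoose_of_neg hm, intChoose_of_neg (show m - 1 < 0 by omega)]
  · simp [intChoose]
  · obtain ⟨k, rfl⟩ : ∃ k : ℕ, m = (k + 1 : ℕ) := ⟨(m - 1).toNat, by omega⟩
    rw [Nat.cast_succ, add_sub_cancel_right, ← Nat.cast_succ]
    simp only [intChoose_natCast, Nat.choose_succ_succ', add_comm]

lemma sum_intChoose_zero_left_mul {N : ℕ} (g : ℕ → ℕ) (a b : ℤ) :
    ∑ k ∈ range N, g k * (intChoose 0 (a - k) * intChoose 0 (b - k)) =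
      ∑ k ∈ range N, if (k : ℤ) = a ∧ (k : ℤ) = b then g k else 0 := by
  refine sum_congr rfl fun k _ => ?_
  simp only [intChoose_zero_left, sub_eq_zero]
  split_ifs <;> grind

lemma card_filter_powersetCard_card_filter {α : Type*} [DecidableEq α] (s : Finset α)
    (p : α → Prop) [DecidablePred p] {w k : ℕ} (hk : k ≤ w) :
    #{S ∈ s.powersetCard w | #{i ∈ S | p i} = k} =
      (#{i ∈ s | p i}).choose k * (#{i ∈ s | ¬p i}).choose (w - k) := by
  have filter_union {X Y : Finset α} (hX : X ⊆ {i ∈ s | p i}) (hY : Y ⊆ {i ∈ s | ¬p i}) :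
      {i ∈ X ∪ Y | p i} = X ∧ {i ∈ X ∪ Y | ¬p i} = Y := by
    constructor <;> ext i <;> have := @hX i <;> have := @hY i <;> simp only [mem_filter] at * <;>
      grind
  rw [← card_powersetCard, ← card_powersetCard, ← card_product]
  refine card_nbij' (fun S => ({i ∈ S | p i}, {i ∈ S | ¬p i})) (fun X => X.1 ∪ X.2)
    ?_ ?_ ?_ ?_
  · intro S hS
    simp only [mem_coe, mem_filter, mem_powersetCard, mem_product] at hS ⊢
    obtain ⟨⟨hSs, hSw⟩, hSk⟩ := hS
    refine ⟨⟨filter_subset_filter _ hSs, hSk⟩, filter_subset_filter _ hSs, ?_⟩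
    have := card_filter_add_card_filter_not (s := S) (fun i => p i)
    omega
  · rintro ⟨X, Y⟩ hXY
    simp only [mem_coe, mem_filter, mem_powersetCard, mem_product] at hXY ⊢
    obtain ⟨⟨hX, hXk⟩, hY, hYk⟩ := hXY
    refine ⟨⟨union_subset (hX.trans (filter_subset _ _)) (hY.trans (filter_subset _ _)), ?_⟩,
      by rw [(filter_union hX hY).1, hXk]⟩
    rw [card_union_of_disjoint (disjoint_filter_filter_not s s p |>.mono hX hY), hXk, hYk]
    omega
  · intro S _
    exact filter_union_filter_not_eq p S
  · rintro ⟨X, Y⟩ hXY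
    simp only [mem_coe, mem_powersetCard, mem_product] at hXY
    obtain ⟨⟨hX, -⟩, hY, -⟩ := hXY
    exact Prod.ext (filter_union hX hY).1 (filter_union hX hY).2

def eastSteps {n : ℕ} (f : Fin n → Bool) : Finset (Fin n) := {i | f i = true}

lemma card_filter_pathsFrom0 (w h : ℕ) (P : Finset (Fin (w + h)) → Prop) [DecidablePred P] :
    #{f ∈ pathsFrom0 w h | P (eastSteps f)} = #{S ∈ powersetCard w univ | P S} := by
  refine card_nbij' eastSteps (fun S i => decide (i ∈ S)) ?_ ?_ ?_ ?_
  · intro f hf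
    simp only [pathsFrom0, coe_filter, mem_univ, true_and, Set.mem_ofPred_eq, mem_filter] at hf ⊢
    simpa [eastSteps] using hf
  · intro S hS
    simp only [pathsFrom0, coe_filter, mem_univ, true_and, Set.mem_ofPred_eq, mem_filter,
      mem_powersetCard, subset_univ] at hS ⊢
    simpa [eastSteps] using hS
  · intro f _
    funext i
    simp [eastSteps]
  · intro S _
    ext i
    simp [eastSteps]

lemma pathPos_fst_eq_card_filter (w h : ℕ) (f : Fin (w + h) → Bool) (t : ℕ) :
    (pathPos w h f t).1 = #{i ∈ eastSteps f | i.val < t} := by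
  simp only [pathPos, eastSteps, filter_filter, and_comm]

lemma pathPos_fst_add_snd (w h : ℕ) (f : Fin (w + h) → Bool) {t : ℕ} (ht : t ≤ w + h) :
    (pathPos w h f t).1 + (pathPos w h f t).2 = t := by
  have := card_filter_add_card_filter_not (s := {i : Fin (w + h) | i.val < t}) (f · = true)
  simp only [filter_filter, Bool.not_eq_true, Fin.card_filter_val_lt, min_eq_right ht] at this
  exact this

lemma pathPos_mem_pathPoints_iff {w h : ℕ} (f g : Fin (w + h) → Bool) {t : ℕ}
    (ht : t ≤ w + h) :
    pathPos w h f t ∈ pathPoints w h g ↔ (pathPos w h f t).1 = (pathPos w h g t).1 := by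
  constructor
  · intro hfg
    obtain ⟨t', ht', hgf⟩ := mem_image.1 hfg
    have := pathPos_fst_add_snd w h f ht
    have := pathPos_fst_add_snd w h g (Nat.le_of_lt_succ (mem_range.1 ht'))
    obtain rfl : t' = t := by rw [hgf] at *; omega
    rw [hgf]
  · intro hfg
    refine mem_image.2 ⟨t, mem_range.2 (Nat.lt_succ_of_le ht), Prod.ext hfg.symm ?_⟩
    have := pathPos_fst_add_snd w h f ht
    have := pathPos_fst_add_snd w h g ht
    omega

lemma interCount_eq_card_filter {w h : ℕ} (f g : Fin (w + h) → Bool) :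
    interCount w h f g =
      #{t ∈ range (w + h + 1) | (pathPos w h f t).1 = (pathPos w h g t).1} := by
  have injOn : Set.InjOn (pathPos w h f) (range (w + h + 1)) := fun t ht t' ht' hfg => by
    have := pathPos_fst_add_snd w h f (Nat.le_of_lt_succ (mem_range.1 ht))
    have := pathPos_fst_add_snd w h f (Nat.le_of_lt_succ (mem_range.1 ht'))
    rw [hfg] at *
    omega
  rw [interCount, ← filter_mem_eq_inter, pathPoints.eq_def w h f, filter_image,
    card_image_of_injOn (injOn.mono (filter_subset _ _))]
  exact congrArg card <| filter_congr fun t ht =>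
    pathPos_mem_pathPoints_iff f g (Nat.le_of_lt_succ (mem_range.1 ht))

lemma pathPos_fst_le {w h : ℕ} {f : Fin (w + h) → Bool} (hf : f ∈ pathsFrom0 w h) (t : ℕ) :
    (pathPos w h f t).1 ≤ w := by
  simp only [pathsFrom0, mem_filter, mem_univ, true_and] at hf
  rw [pathPos_fst_eq_card_filter]
  exact (card_filter_le (eastSteps f) _).trans hf.le

lemma card_filter_pathPos_fst_eq (w h : ℕ) {t : ℕ} (ht : t ≤ w + h) (k : ℕ) :
    #{f ∈ pathsFrom0 w h | (pathPos w h f t).1 = k} =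
      t.choose k * intChoose (w + h - t) (w - k) := by
  rcases le_or_gt k w with hk | hk
  · simp_rw [pathPos_fst_eq_card_filter]
    rw [card_filter_pathsFrom0 w h (fun S => #{i ∈ S | i.val < t} = k),
      card_filter_powersetCard_card_filter _ _ hk]
    have before : #{i : Fin (w + h) | i.val < t} = t := by
      rw [Fin.card_filter_val_lt, min_eq_right ht]
    have after : #{i : Fin (w + h) | ¬i.val < t} = w + h - t := by
      have := card_filter_add_card_filter_not (s := univ) fun i : Fin (w + h) => i.val < t
      rw [before, card_univ, Fintype.card_fin] at this
      omega
    rw [before, after, ← Nat.cast_sub hk, intChoose_natCast]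
  · rw [intChoose_of_neg (by omega), mul_zero, card_eq_zero, filter_eq_empty_iff]
    intro f hf
    have := pathPos_fst_le hf t
    omega

lemma sum_sum_ite_eq_sum_card_sq {α β : Type*} [DecidableEq β] {P : Finset α} {K : Finset β}
    {c : α → β} (hc : ∀ U ∈ P, c U ∈ K) :
    ∑ U ∈ P, ∑ V ∈ P, (if c U = c V then 1 else 0) = ∑ k ∈ K, #{U ∈ P | c U = k} ^ 2 := by
  rw [← sum_fiberwise_of_maps_to hc]
  refine sum_congr rfl fun k _ => ?_
  have fiber : ∀ U ∈ {U ∈ P | c U = k},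
      ∑ V ∈ P, (if c U = c V then 1 else 0) = #{V ∈ P | c V = k} := by
    intro U hU
    rw [(mem_filter.1 hU).2, sum_boole, Nat.cast_id]
    simp only [eq_comm (a := k)]
  rw [sum_congr rfl fiber, sum_const, smul_eq_mul, sq]

-- The sum over pairs of paths from the origin with `s` steps, ending at `(a, s - a)` and
-- `(b, s - b)`, of the number of common points `(k, t - k)`.
def meetSum (s : ℕ) (a b : ℤ) : ℕ :=
  ∑ p ∈ antidiagonal s, ∑ k ∈ range (p.1 + 1),
    p.1.choose k ^ 2 * (intChoose p.2 (a - k) * intChoose p.2 (b - k))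

theorem sum_sum_interCount_eq_meetSum (w h : ℕ) :
    ∑ U ∈ pathsFrom0 w h, ∑ V ∈ pathsFrom0 w h, interCount w h U V = meetSum (w + h) w w := by
  calc _ = ∑ t ∈ range (w + h + 1), ∑ U ∈ pathsFrom0 w h, ∑ V ∈ pathsFrom0 w h,
        if (pathPos w h U t).1 = (pathPos w h V t).1 then (1 : ℕ) else 0 := by
        simp only [interCount_eq_card_filter, card_filter]
        exact (sum_congr rfl fun U _ => sum_comm).trans sum_comm
    _ = ∑ t ∈ range (w + h + 1), ∑ k ∈ range (t + 1),
        #{f ∈ pathsFrom0 w h | (pathPos w h f t).1 = k} ^ 2 := by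
        refine sum_congr rfl fun t ht => sum_sum_ite_eq_sum_card_sq fun U _ => ?_
        exact mem_range.2 <| Nat.lt_succ_of_le <|
          Nat.le.intro (pathPos_fst_add_snd w h U (Nat.le_of_lt_succ (mem_range.1 ht)))
    _ = meetSum (w + h) w w := by
        rw [meetSum, Nat.sum_antidiagonal_eq_sum_range_succ_mk]
        refine sum_congr rfl fun t ht => sum_congr rfl fun k _ => ?_
        rw [card_filter_pathPos_fst_eq w h (Nat.le_of_lt_succ (mem_range.1 ht))]
        ring

lemma meetSum_succ (s : ℕ) (a b : ℤ) :
    meetSum (s + 1) a b =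
      (∑ k ∈ range (s + 1 + 1), if (k : ℤ) = a ∧ (k : ℤ) = b then (s + 1).choose k ^ 2 else 0) +
        (meetSum s a b + meetSum s (a - 1) b + meetSum s a (b - 1) +
          meetSum s (a - 1) (b - 1)) := by
  rw [meetSum, Nat.sum_antidiagonal_succ', sum_intChoose_zero_left_mul]
  congr 1
  simp only [meetSum, ← sum_add_distrib]
  refine sum_congr rfl fun p _ => sum_congr rfl fun k _ => ?_
  rw [intChoose_succ, intChoose_succ, sub_right_comm a, sub_right_comm b]
  ring

def truncVandermonde (n : ℕ) (a b : ℤ) : ℕ :=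
  ∑ j ∈ range (n + 1),
    if (j : ℤ) ≤ a ∧ (j : ℤ) ≤ b then n.choose j * intChoose n (a + b + 1 - j) else 0

lemma truncVandermonde_zero (a b : ℤ) : truncVandermonde 0 a b = 0 := by
  rw [truncVandermonde, sum_range_one, ite_eq_right_iff]
  rintro ⟨ha, hb⟩
  rw [intChoose_of_lt (by push_cast at ha hb ⊢; omega), mul_zero]

lemma truncVandermonde_succ_eq_sum (n : ℕ) (a b : ℤ) :
    truncVandermonde (n + 1) a b =
      (∑ j ∈ range (n + 1), if (j : ℤ) ≤ a ∧ (j : ℤ) ≤ b then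
        n.choose j * (intChoose n (a + b + 1 - j) + intChoose n (a + b - j)) else 0) +
      ∑ j ∈ range (n + 1), if (j : ℤ) < a ∧ (j : ℤ) < b then
        n.choose j * (intChoose n (a + b - j) + intChoose n (a + b - 1 - j)) else 0 := by
  have pascal : truncVandermonde (n + 1) a b =
      (∑ j ∈ range (n + 1 + 1), if (j : ℤ) ≤ a ∧ (j : ℤ) ≤ b then
          intChoose n j * (intChoose n (a + b + 1 - j) + intChoose n (a + b - j)) else 0) +
      ∑ j ∈ range (n + 1 + 1), if (j : ℤ) ≤ a ∧ (j : ℤ) ≤ b then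
          intChoose n (j - 1) * (intChoose n (a + b + 1 - j) + intChoose n (a + b - j)) else 0 := by
    rw [truncVandermonde, ← sum_add_distrib]
    refine sum_congr rfl fun j _ => ?_
    rw [← intChoose_natCast, intChoose_succ, intChoose_succ, sub_right_comm _ _ (1 : ℤ),
      add_sub_cancel_right]
    split_ifs <;> ring
  have drop_last : (∑ j ∈ range (n + 1 + 1), if (j : ℤ) ≤ a ∧ (j : ℤ) ≤ b then
      intChoose n j * (intChoose n (a + b + 1 - j) + intChoose n (a + b - j)) else 0) =
      ∑ j ∈ range (n + 1), if (j : ℤ) ≤ a ∧ (j : ℤ) ≤ b then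
        n.choose j * (intChoose n (a + b + 1 - j) + intChoose n (a + b - j)) else 0 := by
    rw [sum_range_succ, intChoose_of_lt (by push_cast; omega)]
    simp
  have drop_first : (∑ j ∈ range (n + 1 + 1), if (j : ℤ) ≤ a ∧ (j : ℤ) ≤ b then
      intChoose n (j - 1) * (intChoose n (a + b + 1 - j) + intChoose n (a + b - j)) else 0) =
      ∑ j ∈ range (n + 1), if (j : ℤ) < a ∧ (j : ℤ) < b then
        n.choose j * (intChoose n (a + b - j) + intChoose n (a + b - 1 - j)) else 0 := by
    rw [sum_range_succ', intChoose_of_neg (by simp)]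
    simp only [zero_mul, ite_self, add_zero]
    refine sum_congr rfl fun j _ => ?_
    rw [Nat.cast_succ, add_sub_cancel_right, intChoose_natCast,
      show a + b + 1 - ((j : ℤ) + 1) = a + b - j by ring,
      show a + b - ((j : ℤ) + 1) = a + b - 1 - j by ring]
    simp only [Int.add_one_le_iff]
  rw [pascal, drop_last, drop_first]

lemma truncVandermonde_succ (n : ℕ) (a b : ℤ) :
    truncVandermonde (n + 1) a b =
      (∑ k ∈ range (n + 1), if (k : ℤ) = a ∧ (k : ℤ) = b then n.choose k ^ 2 else 0) +
        (truncVandermonde n a b + truncVandermonde n (a - 1) b + truncVandermonde n a (b - 1) +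
          truncVandermonde n (a - 1) (b - 1)) := by
  rw [truncVandermonde_succ_eq_sum]
  simp only [truncVandermonde, ← sum_add_distrib]
  refine sum_congr rfl fun j _ => ?_
  rw [show a - 1 + b + 1 - j = a + b - j by ring, show a + (b - 1) + 1 - j = a + b - j by ring,
    show a - 1 + (b - 1) + 1 - j = a + b - 1 - j by ring]
  have diag : (j : ℤ) = a ∧ (j : ℤ) = b →
      n.choose j ^ 2 = n.choose j * intChoose n (a + b - j) := by
    rintro ⟨rfl, rfl⟩
    rw [add_sub_cancel_right, intChoose_natCast, sq]
  split_ifs <;> grind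

theorem meetSum_eq_truncVandermonde (s : ℕ) (a b : ℤ) :
    meetSum s a b = truncVandermonde (s + 1) a b := by
  induction s generalizing a b with
  | zero =>
    rw [truncVandermonde_succ, meetSum, Nat.antidiagonal_zero, sum_singleton,
      sum_intChoose_zero_left_mul]
    simp [truncVandermonde_zero]
  | succ s ih => rw [meetSum_succ, truncVandermonde_succ (s + 1), ih, ih, ih, ih]

lemma sum_antidiagonal_eq_two_mul_sum_fst_le {f : ℕ × ℕ → ℕ} (hf : ∀ p, f p.swap = f p)
    (w : ℕ) : ∑ p ∈ antidiagonal (2 * w + 1), f p =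
      2 * ∑ p ∈ antidiagonal (2 * w + 1), if p.1 ≤ w then f p else 0 := by
  have split : ∑ p ∈ antidiagonal (2 * w + 1), f p =
      ∑ p ∈ antidiagonal (2 * w + 1), ((if p.1 ≤ w then f p else 0) +
        if p.swap.1 ≤ w then f p.swap else 0) := by
    refine sum_congr rfl fun p hp => ?_
    rw [HasAntidiagonal.mem_antidiagonal] at hp
    rw [hf, Prod.fst_swap]
    split_ifs <;> omega
  rw [split, sum_add_distrib, Nat.sum_antidiagonal_swap (f := fun p => if p.1 ≤ w then f p else 0),
    ← two_mul]

lemma two_mul_truncVandermonde_self (n w : ℕ) :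
    2 * truncVandermonde n w w = (2 * n).choose (2 * w + 1) := by
  rw [two_mul n, Nat.add_choose_eq,
    sum_antidiagonal_eq_two_mul_sum_fst_le (fun p => by simp [mul_comm]),
    Nat.sum_antidiagonal_eq_sum_range_succ_mk]
  congr 1
  set g : ℕ → ℕ := fun j => if j ≤ w then n.choose j * n.choose (2 * w + 1 - j) else 0
  have hg : ∀ j ≥ min (n + 1) (w + 1), g j = 0 := fun j hj => by
    rcases le_or_gt j w with hjw | hjw
    · simp only [g, if_pos hjw, Nat.choose_eq_zero_of_lt (show n < j by omega), zero_mul]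
    · simp only [g, if_neg (by omega : ¬ j ≤ w)]
  calc truncVandermonde n w w = ∑ j ∈ range (n + 1), g j := by
        refine sum_congr rfl fun j _ => ?_
        simp only [g, and_self, Nat.cast_le]
        split_ifs with hjw
        · rw [show (w : ℤ) + w + 1 - j = (2 * w + 1 - j : ℕ) by omega, intChoose_natCast]
        · rfl
    _ = ∑ j ∈ range (2 * w + 1).succ, g j := by
        rw [eventually_constant_sum hg (n := n + 1) (by omega),
          eventually_constant_sum hg (n := (2 * w + 1).succ) (by omega)]

/-- First moment (Eq. (10)): for `w, h ≥ 0` and `s = w + h`,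
`2 · Σ_{U ∈ 𝒫} Σ_{V ∈ 𝒫} |U ∩ V| = C(2s+2, 2w+1)`, where `𝒫` is the set of
monotone lattice paths from `(0,0)` to `(w,h)`. -/
theorem first_moment_intersections (w h s : ℕ) (hs : s = w + h) :
    2 * ∑ U ∈ pathsFrom0 w h, ∑ V ∈ pathsFrom0 w h, interCount w h U V =
      Nat.choose (2 * s + 2) (2 * w + 1) := by
  rw [sum_sum_interCount_eq_meetSum, meetSum_eq_truncVandermonde, two_mul_truncVandermonde_self,
    hs, mul_add_one]
end

section
/- For all integers w ≥ 2 and h ≥ 1, with s = w + h, the binomial identity 2 · Σ_{k=0}^{w−2} C(s−3, w−1+k) · C(s−2, w−2−k) + C(s−3, w−2)² = C(2s−5, 2w−3) holds, where C(n,k) is the usual binomial coefficient (equal to 0 for k > n). -/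
/-!
With `a = s - 3` and `m = w - 2`, Vandermonde expands `C(2a+1, 2m+1) = C(a + (a+1), 2m+1)` as
`∑ᵢ C(a, i) C(a+1, 2m+1-i)`. The terms with `i > m` form the sum `T` of the statement. For the
terms with `i ≤ m`, Pascal's rule moves the `+1` from the second factor to the first at the cost
of a telescoping boundary term `C(a, m)²`, and what remains is `T` read backwards.
-/

open Finset

theorem sum_range_choose_mul_choose_succ_right (a b n r : ℕ) :
    ∑ i ∈ range (n + 1), a.choose i * (b + 1).choose (n + 1 + r - i) =
      ∑ i ∈ range (n + 1), (a + 1).choose i * b.choose (n + 1 + r - i) +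
        a.choose n * b.choose r := by
  induction n generalizing r with
  | zero => simp [Nat.choose_succ_succ', add_comm]
  | succ n ih =>
    rw [sum_range_succ, sum_range_succ _ (n + 1), show n + 1 + 1 + r = n + 1 + (r + 1) by ring,
      ih, Nat.add_sub_cancel_left, Nat.choose_succ_succ' b, Nat.choose_succ_succ' a]
    ring

theorem two_mul_sum_choose_mul_choose_add_sq (a m : ℕ) :
    2 * ∑ k ∈ range (m + 1), a.choose (m + 1 + k) * (a + 1).choose (m - k) + a.choose m ^ 2 =
      (a + (a + 1)).choose (2 * m + 1) := by
  set T := ∑ k ∈ range (m + 1), a.choose (m + 1 + k) * (a + 1).choose (m - k)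
  have hlow : ∑ i ∈ range (m + 1), (a + 1).choose i * a.choose (m + 1 + m - i) = T := by
    rw [← sum_range_reflect]
    refine sum_congr rfl fun k hk => ?_
    have hk : k ≤ m := Nat.lt_succ_iff.1 (mem_range.1 hk)
    rw [mul_comm, show m + 1 - 1 - k = m - k by omega, show m + 1 + m - (m - k) = m + 1 + k by omega]
  have hhigh : ∑ k ∈ range (m + 1),
      a.choose (m + 1 + k) * (a + 1).choose (m + 1 + m - (m + 1 + k)) = T :=
    sum_congr rfl fun k _ => by rw [show m + 1 + m - (m + 1 + k) = m - k by omega]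
  rw [Nat.add_choose_eq,
    Nat.sum_antidiagonal_eq_sum_range_succ (fun i j => a.choose i * (a + 1).choose j),
    show (2 * m + 1).succ = m + 1 + (m + 1) by omega, show 2 * m + 1 = m + 1 + m by omega,
    sum_range_add, hhigh, sum_range_choose_mul_choose_succ_right, hlow]
  ring

/-- For `w ≥ 2`, `h ≥ 1` and `s = w + h`:
`2 · Σ_{k=0}^{w-2} C(s-3, w-1+k)·C(s-2, w-2-k) + C(s-3, w-2)² = C(2s-5, 2w-3)`. -/
theorem T1_identity (w h s : ℕ) (hw : 2 ≤ w) (hh : 1 ≤ h) (hs : s = w + h) :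
    2 * (∑ k ∈ Finset.range (w - 1),
          Nat.choose (s - 3) (w - 1 + k) * Nat.choose (s - 2) (w - 2 - k))
        + Nat.choose (s - 3) (w - 2) ^ 2 =
      Nat.choose (2 * s - 5) (2 * w - 3) := by
  obtain ⟨m, rfl⟩ : ∃ m, w = m + 2 := ⟨w - 2, by omega⟩
  obtain ⟨a, rfl⟩ : ∃ a, s = a + 3 := ⟨s - 3, by omega⟩
  rw [show a + 3 - 3 = a by omega, show a + 3 - 2 = a + 1 by omega, show m + 2 - 1 = m + 1 by omega,
    show m + 2 - 2 = m by omega, show 2 * (a + 3) - 5 = a + (a + 1) by omega,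
    show 2 * (m + 2) - 3 = 2 * m + 1 by omega]
  exact two_mul_sum_choose_mul_choose_add_sq a m
end

section
/- For all integers w ≥ 2 and h ≥ 1, with s = w + h, the binomial identity 2 · Σ_{k=0}^{w−2} (k+1) · C(s−2, w+k) · C(s−2, w−2−k) = (s−3) · C(s−2, w−1) · C(s−4, w−2) holds, where C(n,k) is the usual binomial coefficient (equal to 0 for k > n). -/
open Nat

private lemma factq (n : ℕ) : ((n ! : ℚ)) ≠ 0 := by
  exact_mod_cast Nat.factorial_ne_zero n

private lemma P1r (k m d : ℕ) :
    (k+d+2)*(k+d+1)*(2*((k+1) * Nat.choose (2*k+m+d+4) (2*k+m+3) * Nat.choose (2*k+m+d+4) (m+1)))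
      + (k+1)*(k+2)*(2*k+m+4) * Nat.choose (2*k+m+d+4) (2*k+m+4) * Nat.choose (2*k+m+d+3) m
    = k*(k+1)*(2*k+m+3) * Nat.choose (2*k+m+d+4) (2*k+m+3) * Nat.choose (2*k+m+d+3) (m+1)
      + (2*k+m+d+3)*(2*k+m+d+4)*(2*((k+1) * Nat.choose (2*k+m+d+3) (2*k+m+3) * Nat.choose (2*k+m+d+3) (m+1))) := by
  have hn1 := Nat.choose_mul_succ_eq (2*k+m+d+3) (2*k+m+3)
  rw [show 2*k+m+d+3+1 = 2*k+m+d+4 by omega, show 2*k+m+d+3+1-(2*k+m+3) = d+1 by omega] at hn1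
  have hn2 := Nat.add_one_mul_choose_eq (2*k+m+d+3) (2*k+m+3)
  rw [show 2*k+m+d+3+1 = 2*k+m+d+4 by omega, show 2*k+m+3+1 = 2*k+m+4 by omega] at hn2
  have hn3 := Nat.add_one_mul_choose_eq (2*k+m+d+3) m
  rw [show 2*k+m+d+3+1 = 2*k+m+d+4 by omega] at hn3
  have hn4 := Nat.choose_succ_right_eq (2*k+m+d+3) m
  rw [show 2*k+m+d+3-m = 2*k+d+3 by omega] at hn4
  qify at hn1 hn2 hn3 hn4 ⊢
  have hd : ((d:ℚ)+1) ≠ 0 := by positivity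
  have hm : ((m:ℚ)+1) ≠ 0 := by positivity
  have hA : ((2*(k:ℚ)+m+4)) ≠ 0 := by positivity
  have c1 : ((Nat.choose (2*k+m+d+4) (2*k+m+3) : ℚ))
      = (Nat.choose (2*k+m+d+3) (2*k+m+3) : ℚ) * (2*(k:ℚ)+m+d+4) / ((d:ℚ)+1) := by
    rw [eq_div_iff hd]; linarith [hn1]
  have c2 : ((Nat.choose (2*k+m+d+4) (2*k+m+4) : ℚ))
      = (2*(k:ℚ)+m+d+4) * (Nat.choose (2*k+m+d+3) (2*k+m+3) : ℚ) / (2*(k:ℚ)+m+4) := by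
    rw [eq_div_iff hA]; linarith [hn2]
  have c3 : ((Nat.choose (2*k+m+d+4) (m+1) : ℚ))
      = (2*(k:ℚ)+m+d+4) * (Nat.choose (2*k+m+d+3) m : ℚ) / ((m:ℚ)+1) := by
    rw [eq_div_iff hm]; linarith [hn3]
  have c4 : ((Nat.choose (2*k+m+d+3) (m+1) : ℚ))
      = (Nat.choose (2*k+m+d+3) m : ℚ) * (2*(k:ℚ)+d+3) / ((m:ℚ)+1) := by
    rw [eq_div_iff hm]; linarith [hn4]
  rw [c1, c2, c3, c4]
  field_simp
  ring

private lemma P0r (k d : ℕ) :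
    (k+d+2)*(k+d+1)*(2*((k+1) * Nat.choose (2*k+d+3) (2*k+2)))
    = k*(k+1)*(2*k+2) * Nat.choose (2*k+d+3) (2*k+2)
      + (2*k+d+2)*(2*k+d+3)*(2*((k+1) * Nat.choose (2*k+d+2) (2*k+2))) := by
  have hn1 := Nat.choose_mul_succ_eq (2*k+d+2) (2*k+2)
  rw [show 2*k+d+2+1 = 2*k+d+3 by omega, show 2*k+d+2+1-(2*k+2) = d+1 by omega] at hn1
  qify at hn1 ⊢
  have hd : ((d:ℚ)+1) ≠ 0 := by positivity
  have c1 : ((Nat.choose (2*k+d+3) (2*k+2) : ℚ))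
      = (Nat.choose (2*k+d+2) (2*k+2) : ℚ) * (2*(k:ℚ)+d+3) / ((d:ℚ)+1) := by
    rw [eq_div_iff hd]; linarith [hn1]
  rw [c1]
  field_simp
  ring

/-- Telescoping certificate. -/
private def gg (v t k : ℕ) : ℕ :=
  if k ≤ v then k*(k+1)*(v+2+k) * Nat.choose (v+t+2) (v+2+k) * Nat.choose (v+t+1) (v-k) else 0

private lemma ptwise (v t k : ℕ) (hk : k ≤ v) :
    (t+1)*t*(2*((k+1) * Nat.choose (v+t+2) (v+2+k) * Nat.choose (v+t+2) (v-k))) + gg v t (k+1)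
      = gg v t k
        + (v+t+1)*(v+t+2)*(2*((k+1) * Nat.choose (v+t+1) (v+2+k) * Nat.choose (v+t+1) (v-k))) := by
  obtain ⟨j, rfl⟩ : ∃ j, v = k + j := ⟨v - k, by omega⟩
  obtain rfl | ⟨m, rfl⟩ : j = 0 ∨ ∃ m, j = m + 1 := by
    rcases j with _ | m
    exacts [Or.inl rfl, Or.inr ⟨m, rfl⟩]
  · -- j = 0
    unfold gg
    rw [if_neg (by omega), if_pos (by omega)]
    simp only [Nat.add_zero, Nat.sub_self, Nat.choose_zero_right, Nat.mul_one]
    rw [show k+2+k = 2*k+2 by omega]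
    rcases Nat.lt_or_ge t k with ht | ht
    · rw [Nat.choose_eq_zero_of_lt (show k+t+2 < 2*k+2 by omega),
          Nat.choose_eq_zero_of_lt (show k+t+1 < 2*k+2 by omega)]
      ring
    · obtain ⟨e, rfl⟩ : ∃ e, t = k + e := ⟨t - k, by omega⟩
      obtain rfl | ⟨d, rfl⟩ : e = 0 ∨ ∃ d, e = d + 1 := by
        rcases e with _ | d
        exacts [Or.inl rfl, Or.inr ⟨d, rfl⟩]
      · rw [show k+(k+0)+2 = 2*k+2 by omega, show k+(k+0)+1 = 2*k+1 by omega,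
            Nat.choose_self, Nat.choose_eq_zero_of_lt (show 2*k+1 < 2*k+2 by omega)]
        ring
      · rw [show k+(k+(d+1))+2 = 2*k+d+3 by omega, show k+(k+(d+1))+1 = 2*k+d+2 by omega,
            show k+(d+1)+1 = k+d+2 by omega, show k+(d+1) = k+d+1 by omega]
        exact P0r k d
  · -- j = m+1
    unfold gg
    rw [if_pos (by omega), if_pos (by omega)]
    rw [show k+(m+1)-k = m+1 by omega, show k+(m+1)-(k+1) = m by omega,
        show k+(m+1)+2+(k+1) = 2*k+m+4 by omega, show k+(m+1)+2+k = 2*k+m+3 by omega,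
        show k+(m+1)+t+2 = k+m+t+3 by omega, show k+(m+1)+t+1 = k+m+t+2 by omega,
        show k+1+1 = k+2 by omega]
    rcases Nat.lt_or_ge t k with ht | ht
    · rw [Nat.choose_eq_zero_of_lt (show k+m+t+3 < 2*k+m+3 by omega),
          Nat.choose_eq_zero_of_lt (show k+m+t+3 < 2*k+m+4 by omega),
          Nat.choose_eq_zero_of_lt (show k+m+t+2 < 2*k+m+3 by omega)]
      ring
    · obtain ⟨e, rfl⟩ : ∃ e, t = k + e := ⟨t - k, by omega⟩
      obtain rfl | ⟨d, rfl⟩ : e = 0 ∨ ∃ d, e = d + 1 := by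
        rcases e with _ | d
        exacts [Or.inl rfl, Or.inr ⟨d, rfl⟩]
      · rw [show k+m+(k+0)+3 = 2*k+m+3 by omega, show k+m+(k+0)+2 = 2*k+m+2 by omega,
            Nat.choose_self, Nat.choose_eq_zero_of_lt (show 2*k+m+3 < 2*k+m+4 by omega),
            Nat.choose_eq_zero_of_lt (show 2*k+m+2 < 2*k+m+3 by omega)]
        have hR : Nat.choose (2*k+m+2) (m+1) * (2*k+m+3) = Nat.choose (2*k+m+3) (m+1) * (2*k+2) := by
          have h := Nat.choose_mul_succ_eq (2*k+m+2) (m+1)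
          rwa [show 2*k+m+2+1 = 2*k+m+3 by omega, show 2*k+m+2+1-(m+1) = 2*k+2 by omega] at h
        zify at hR ⊢
        linear_combination (-(k:ℤ)*(k+1)) * hR
      · rw [show k+m+(k+(d+1))+3 = 2*k+m+d+4 by omega, show k+m+(k+(d+1))+2 = 2*k+m+d+3 by omega,
            show k+(d+1)+1 = k+d+2 by omega, show k+(d+1) = k+d+1 by omega]
        exact P1r k m d

private def Sv (n v : ℕ) : ℕ :=
  ∑ k ∈ Finset.range (v+1), (k+1) * Nat.choose n (v+2+k) * Nat.choose n (v-k)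

private lemma Tlem (v t : ℕ) :
    (t+1)*t*(2 * Sv (v+t+2) v) = (v+t+1)*(v+t+2)*(2 * Sv (v+t+1) v) := by
  have hsum : ∑ k ∈ Finset.range (v+1),
      ((t+1)*t*(2*((k+1) * Nat.choose (v+t+2) (v+2+k) * Nat.choose (v+t+2) (v-k))) + gg v t (k+1))
    = ∑ k ∈ Finset.range (v+1),
      (gg v t k + (v+t+1)*(v+t+2)*(2*((k+1) * Nat.choose (v+t+1) (v+2+k) * Nat.choose (v+t+1) (v-k)))) :=
    Finset.sum_congr rfl (fun k hk => ptwise v t k (by have := Finset.mem_range.mp hk; omega))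
  rw [Finset.sum_add_distrib, Finset.sum_add_distrib] at hsum
  have hshift : ∑ k ∈ Finset.range (v+1), gg v t (k+1) = ∑ k ∈ Finset.range (v+1), gg v t k := by
    have h1 := Finset.sum_range_succ' (gg v t) (v+1)
    have h2 := Finset.sum_range_succ (gg v t) (v+1)
    have h0 : gg v t 0 = 0 := by simp [gg]
    have hv : gg v t (v+1) = 0 := by simp [gg]
    omega
  rw [hshift] at hsum
  have h3 : ∑ k ∈ Finset.range (v+1),
      ((t+1)*t*(2*((k+1) * Nat.choose (v+t+2) (v+2+k) * Nat.choose (v+t+2) (v-k))))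
    = ∑ k ∈ Finset.range (v+1),
      ((v+t+1)*(v+t+2)*(2*((k+1) * Nat.choose (v+t+1) (v+2+k) * Nat.choose (v+t+1) (v-k)))) := by
    omega
  simp only [Sv, Finset.mul_sum]
  exact h3

private lemma Lmain (v t : ℕ) :
    2 * Sv (v+t+1) v = (v+t) * Nat.choose (v+t+1) (v+1) * Nat.choose (v+t-1) v := by
  induction t with
  | zero =>
    have hS : Sv (v+0+1) v = 0 := Finset.sum_eq_zero (fun k hk => by
      rw [Nat.choose_eq_zero_of_lt (show v+0+1 < v+2+k by omega)]
      ring)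
    rw [hS]
    rcases v with _ | u
    · simp
    · rw [Nat.choose_eq_zero_of_lt (show u+1+0-1 < u+1 by omega)]
      ring
  | succ t IH =>
    obtain rfl | ⟨τ, rfl⟩ : t = 0 ∨ ∃ τ, t = τ + 1 := by
      rcases t with _ | τ
      exacts [Or.inl rfl, Or.inr ⟨τ, rfl⟩]
    · -- second base case: n = v+2
      have hS : Sv (v+(0+1)+1) v = Nat.choose (v+2) v := by
        rw [Sv]
        rw [Finset.sum_eq_single 0 (fun k hk hk0 => by
              rw [Nat.choose_eq_zero_of_lt (show v+(0+1)+1 < v+2+k by omega)]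
              ring)
            (fun hmem => by simp at hmem)]
        rw [show v+(0+1)+1 = v+2 by omega, show v+2+0 = v+2 by omega, Nat.choose_self,
            show v-0 = v by omega]
        ring
      rw [hS, show v+(0+1)+1 = v+2 by omega, show v+(0+1) = v+1 by omega,
          show v+(0+1)-1 = v by omega, Nat.choose_self,
          show v+2 = (v+1)+1 by omega, Nat.choose_succ_self_right]
      have he : Even ((v+1)*(v+2)) := Nat.even_mul_succ_self (v+1)
      have hc : Nat.choose (v+1+1) v = Nat.choose (v+1+1) 2 := by
        rw [← Nat.choose_symm (show 2 ≤ v+1+1 by omega), show v+1+1-2 = v by omega]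
      rw [hc, Nat.choose_two_right, show v+1+1 = v+2 by omega, show v+2-1 = v+1 by omega]
      obtain ⟨c, hce⟩ := he
      have h2 : (v+2)*(v+1) = (v+1)*(v+2) := by ring
      omega
    · -- inductive step
      have hT := Tlem v (τ+1)
      rw [show v+(τ+1)+1 = v+τ+2 by omega, show v+(τ+1)-1 = v+τ by omega,
          show v+(τ+1) = v+τ+1 by omega] at IH
      rw [show v+(τ+1+1)+1 = v+(τ+1)+2 by omega, show v+(τ+1+1) = v+τ+2 by omega,
          show v+τ+2-1 = v+τ+1 by omega]
      rw [show v+(τ+1)+1 = v+τ+2 by omega] at hT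
      rw [IH] at hT
      -- hT : (τ+2)*(τ+1)*(2 * Sv (v+(τ+1)+2) v) = (v+τ+2)*(v+(τ+1)+2)*((v+τ)*C(v+τ+2,v+1)*C(v+τ,v))
      have hB : (v+τ+2)*(v+(τ+1)+2)*((v+τ+1) * Nat.choose (v+τ+2) (v+1) * Nat.choose (v+τ) v)
          = (τ+1+1)*(τ+1)*((v+τ+2) * Nat.choose (v+(τ+1)+2) (v+1) * Nat.choose (v+τ+1) v) := by
        have h1 := Nat.choose_mul_succ_eq (v+τ+2) (v+1)
        rw [show v+τ+2+1 = v+τ+3 by omega, show v+τ+2+1-(v+1) = τ+2 by omega] at h1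
        have h2 := Nat.choose_mul_succ_eq (v+τ) v
        rw [show v+τ+1-v = τ+1 by omega] at h2
        rw [show v+(τ+1)+2 = v+τ+3 by omega]
        zify at h1 h2 ⊢
        linear_combination ((v:ℤ)+τ+2) * (((v:ℤ)+τ+1) * (Nat.choose (v+τ) v : ℤ) * h1
          + ((τ:ℤ)+2) * (Nat.choose (v+τ+3) (v+1) : ℤ) * h2)
      rw [hB] at hT
      exact Nat.eq_of_mul_eq_mul_left (by positivity) hT

/-- For `w ≥ 2`, `h ≥ 1` and `s = w + h`:
`2 · Σ_{k=0}^{w-2} (k+1)·C(s-2, w+k)·C(s-2, w-2-k) = (s-3)·C(s-2, w-1)·C(s-4, w-2)`. -/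
theorem Pstar_identity (w h s : ℕ) (hw : 2 ≤ w) (hh : 1 ≤ h) (hs : s = w + h) :
    2 * (∑ k ∈ Finset.range (w - 1),
          (k + 1) * Nat.choose (s - 2) (w + k) * Nat.choose (s - 2) (w - 2 - k)) =
      (s - 3) * Nat.choose (s - 2) (w - 1) * Nat.choose (s - 4) (w - 2) := by
  obtain ⟨v, rfl⟩ : ∃ v, w = v + 2 := ⟨w - 2, by omega⟩
  obtain ⟨t, rfl⟩ : ∃ t, h = t + 1 := ⟨h - 1, by omega⟩
  subst hs
  have hL := Lmain v t
  rw [Sv] at hL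
  rw [show v+2+(t+1)-2 = v+t+1 by omega, show v+2-1 = v+1 by omega,
      show v+2-2 = v by omega, show v+2+(t+1)-3 = v+t by omega,
      show v+2+(t+1)-4 = v+t-1 by omega]
  exact hL
end

section
/- For all integers w ≥ 2 and h ≥ 1, with s = w + h, the binomial identity 2 · Σ_{i≥0} Σ_{j≥0} C(s−2, w+i+j) · C(s−2, w−2−i−j) = (s−3) · C(s−2, w−1) · C(s−4, w−2) holds, where the sum ranges over all pairs (i,j) of nonnegative integers with i + j ≤ w−2 (all other terms vanish) and C(n,k) is the usual binomial coefficient (equal to 0 for k > n). -/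
/-!
Put `w = v + 2`, `n = s - 2` and `k = i + j`. The summand depends only on `k`, which arises from
`k + 1` pairs `(i, j)`; its two lower indices `a = v + 2 + k` and `b = v - k` satisfy
`a + b = 2v + 2` and `a - b = 2 (k + 1)`. Absorption `a C(n, a) = n C(n-1, a-1)` on each factor,
followed by Pascal's rule, gives
`(a - b) C(n, a) C(n, b) = n (C(n-1, a-1) C(n-1, b) - C(n-1, a) C(n-1, b-1))`,
so the sum over `b = 0, …, v` telescopes to `n C(n-1, v+1) C(n-1, v)`, which one more absorption
turns into the right-hand side.
-/

open Finset

theorem sum_range_sum_range_sub_add {M : Type*} [AddCommMonoid M] (f : ℕ → M) (m : ℕ) :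
    ∑ i ∈ range m, ∑ j ∈ range (m - i), f (i + j) = ∑ k ∈ range m, (k + 1) • f k := by
  rw [← sum_range_diag_flip m fun i j => f (i + j)]
  refine sum_congr rfl fun k _ => ?_
  rw [sum_congr rfl fun j hj => by rw [Nat.add_sub_cancel' (Nat.lt_succ_iff.1 (mem_range.1 hj))],
    sum_const, card_range]

/-- The telescoping step of the header, with `a = p + 1`, `b = q + 1` and the subtracted term
moved to the left. -/
theorem sub_mul_choose_mul_choose_add (n p q : ℕ) (hqp : q ≤ p) :
    (p - q) * (n.choose (p + 1) * n.choose (q + 1)) +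
        n * ((n - 1).choose (p + 1) * (n - 1).choose q) =
      n * ((n - 1).choose p * (n - 1).choose (q + 1)) := by
  cases n with
  | zero => simp
  | succ n =>
    have hp := Nat.add_one_mul_choose_eq n p
    have hq := Nat.add_one_mul_choose_eq n q
    rw [Nat.choose_succ_succ'] at hp hq
    rw [Nat.add_sub_cancel, Nat.choose_succ_succ' n p, Nat.choose_succ_succ' n q]
    zify [hqp] at hp hq ⊢
    linear_combination (-(n.choose q + n.choose (q + 1) : ℤ)) * hp +
      (n.choose p + n.choose (p + 1) : ℤ) * hq

theorem sum_range_sub_two_mul_mul_choose_mul_choose (n m c : ℕ) (hc : 2 * c < m) :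
    ∑ b ∈ range (c + 1), (m - 2 * b) * (n.choose (m - b) * n.choose b)
      = n * ((n - 1).choose (m - 1 - c) * (n - 1).choose c) := by
  induction c with
  | zero =>
    obtain ⟨m, rfl⟩ : ∃ m', m = m' + 1 := ⟨m - 1, by omega⟩
    cases n with
    | zero => simp
    | succ n => simpa [mul_comm] using (Nat.add_one_mul_choose_eq n m).symm
  | succ c ih =>
    obtain ⟨p, rfl⟩ : ∃ p, m = p + c + 2 := ⟨m - c - 2, by omega⟩
    rw [sum_range_succ, ih (by omega), show p + c + 2 - 1 - c = p + 1 by omega,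
      show p + c + 2 - 2 * (c + 1) = p - c by omega, show p + c + 2 - (c + 1) = p + 1 by omega,
      show p + c + 2 - 1 - (c + 1) = p by omega, add_comm]
    exact sub_mul_choose_mul_choose_add n p c (by omega)

theorem two_mul_sum_range_succ_mul_choose_mul_choose (n v : ℕ) :
    2 * ∑ k ∈ range (v + 1), (k + 1) * (n.choose (v + 2 + k) * n.choose (v - k))
      = n * ((n - 1).choose (v + 1) * (n - 1).choose v) := by
  have h := sum_range_sub_two_mul_mul_choose_mul_choose n (2 * v + 2) v (by omega)
  rw [show 2 * v + 2 - 1 - v = v + 1 by omega] at h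
  rw [← h, mul_sum, ← sum_range_reflect]
  refine sum_congr rfl fun k hk => ?_
  have hk : k < v + 1 := mem_range.1 hk
  rw [show v + 1 - 1 - k = v - k by omega, show v + 2 + (v - k) = 2 * v + 2 - k by omega,
    show v - (v - k) = k by omega, show 2 * v + 2 - 2 * k = 2 * (v - k + 1) by omega, mul_assoc]

theorem mul_choose_pred_mul_choose_pred (n v : ℕ) :
    n * ((n - 1).choose (v + 1) * (n - 1).choose v) =
      (n - 1) * n.choose (v + 1) * (n - 2).choose v := by
  match n with
  | 0 => simp
  | 1 => simp
  | m + 2 =>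
    have h1 := Nat.choose_mul_succ_eq m v
    have h2 := Nat.choose_mul_succ_eq (m + 1) (v + 1)
    rw [show m + 1 + 1 - (v + 1) = m + 1 - v by omega] at h2
    simp only [Nat.add_sub_cancel, show m + 2 - 1 = m + 1 by omega]
    calc (m + 2) * ((m + 1).choose (v + 1) * (m + 1).choose v)
        = (m + 1).choose (v + 1) * (m + 1 + 1) * (m + 1).choose v := by ring
      _ = (m + 2).choose (v + 1) * ((m + 1).choose v * (m + 1 - v)) := by rw [h2]; ring
      _ = (m + 1) * (m + 2).choose (v + 1) * m.choose v := by rw [← h1]; ring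

theorem Pstar_double_sum_identity_general (w s : ℕ) (hw : 2 ≤ w) :
    2 * (∑ i ∈ Finset.range (w - 1), ∑ j ∈ Finset.range (w - 1 - i),
          Nat.choose (s - 2) (w + i + j) * Nat.choose (s - 2) (w - 2 - i - j)) =
      (s - 3) * Nat.choose (s - 2) (w - 1) * Nat.choose (s - 4) (w - 2) := by
  obtain ⟨v, rfl⟩ : ∃ v, w = v + 2 := ⟨w - 2, by omega⟩
  have hsummand (i j : ℕ) : (s - 2).choose (v + 2 + i + j) * (s - 2).choose (v + 2 - 2 - i - j)
      = (s - 2).choose (v + 2 + (i + j)) * (s - 2).choose (v - (i + j)) := by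
    rw [add_assoc, Nat.add_sub_cancel, Nat.sub_sub]
  have hcollapse := sum_range_sum_range_sub_add
    (fun k => (s - 2).choose (v + 2 + k) * (s - 2).choose (v - k)) (v + 1)
  simp only [smul_eq_mul] at hcollapse
  simp_rw [hsummand]
  rw [show v + 2 - 1 = v + 1 by omega, hcollapse, two_mul_sum_range_succ_mul_choose_mul_choose,
    mul_choose_pred_mul_choose_pred, show s - 2 - 1 = s - 3 by omega,
    show s - 2 - 2 = s - 4 by omega, Nat.add_sub_cancel]

/-- For `w ≥ 2`, `h ≥ 1` and `s = w + h`: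
`2 · Σ_{i,j ≥ 0, i+j ≤ w-2} C(s-2, w+i+j)·C(s-2, w-2-i-j)
  = (s-3)·C(s-2, w-1)·C(s-4, w-2)` (all terms with `i + j > w - 2` vanish). -/
theorem Pstar_double_sum_identity (w h s : ℕ) (hw : 2 ≤ w) (hh : 1 ≤ h)
    (hs : s = w + h) :
    2 * (∑ i ∈ Finset.range (w - 1), ∑ j ∈ Finset.range (w - 1 - i),
          Nat.choose (s - 2) (w + i + j) * Nat.choose (s - 2) (w - 2 - i - j)) =
      (s - 3) * Nat.choose (s - 2) (w - 1) * Nat.choose (s - 4) (w - 2) :=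
  Pstar_double_sum_identity_general w s hw
end

section
/- For every integer s ≥ 4, the identity Σ_{w=1}^{s−1} [ C(2s−4, 2w−2) + (w−1) · C(2s−5, 2w−2) ] = 4^{s−4} · (2s+3) holds, where C(n,k) denotes the binomial coefficient (equal to 0 for k > n). (The left-hand side is the total number of S-walks over all rectangles of semi-perimeter s.) -/
private lemma aux_even_odd (n : ℕ) :
    (∑ j ∈ Finset.range (n + 2), Nat.choose (n + 1) (2 * j)) = 2 ^ n ∧
    (∑ j ∈ Finset.range (n + 2), Nat.choose (n + 1) (2 * j + 1)) = 2 ^ n := by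
  induction n with
  | zero => decide
  | succ n ih =>
    obtain ⟨hE, hO⟩ := ih
    have hp : (2 : ℕ) ^ (n + 1) = 2 ^ n + 2 ^ n := by ring
    constructor
    · rw [Finset.sum_range_succ']
      have hstep : ∑ i ∈ Finset.range (n + 2), Nat.choose (n + 2) (2 * (i + 1)) =
          ∑ i ∈ Finset.range (n + 2),
            (Nat.choose (n + 1) (2 * i + 1) + Nat.choose (n + 1) (2 * i + 2)) :=
        Finset.sum_congr rfl fun i _ => by
          exact Nat.choose_succ_succ (n + 1) (2 * i + 1)
      rw [hstep, Finset.sum_add_distrib, hO]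
      have hB : ∑ i ∈ Finset.range (n + 2), Nat.choose (n + 1) (2 * i + 2) =
          (∑ i ∈ Finset.range (n + 1), Nat.choose (n + 1) (2 * i + 2)) +
            Nat.choose (n + 1) (2 * (n + 1) + 2) := Finset.sum_range_succ _ _
      have hz : Nat.choose (n + 1) (2 * (n + 1) + 2) = 0 :=
        Nat.choose_eq_zero_of_lt (by omega)
      have hE' := hE
      rw [Finset.sum_range_succ'] at hE'
      simp only [Nat.mul_succ, Nat.mul_zero, Nat.choose_zero_right] at hE'
      simp only [Nat.mul_zero, Nat.choose_zero_right, hB, hz, hp]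
      omega
    · have hstep : ∑ j ∈ Finset.range (n + 3), Nat.choose (n + 2) (2 * j + 1) =
          ∑ j ∈ Finset.range (n + 3),
            (Nat.choose (n + 1) (2 * j) + Nat.choose (n + 1) (2 * j + 1)) :=
        Finset.sum_congr rfl fun j _ => by
          exact Nat.choose_succ_succ (n + 1) (2 * j)
      rw [hstep, Finset.sum_add_distrib, Finset.sum_range_succ, Finset.sum_range_succ
        (fun j => Nat.choose (n + 1) (2 * j + 1)), hE, hO]
      have hz1 : Nat.choose (n + 1) (2 * (n + 2)) = 0 :=
        Nat.choose_eq_zero_of_lt (by omega)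
      have hz2 : Nat.choose (n + 1) (2 * (n + 2) + 1) = 0 :=
        Nat.choose_eq_zero_of_lt (by omega)
      rw [hz1, hz2, hp]
      omega

private lemma aux_sum_trunc {f : ℕ → ℕ} {a b : ℕ} (hab : a ≤ b)
    (hf : ∀ j, a ≤ j → f j = 0) :
    ∑ j ∈ Finset.range b, f j = ∑ j ∈ Finset.range a, f j :=
  (Finset.sum_subset (Finset.range_subset_range.2 hab) fun x hx hnx =>
    hf x (by simp only [Finset.mem_range] at hx hnx; omega)).symm

private lemma aux_sum_even (n N : ℕ) (hN : n + 2 ≤ 2 * N) :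
    ∑ j ∈ Finset.range N, Nat.choose (n + 1) (2 * j) = 2 ^ n := by
  have hc : ∀ j, (n + 1) / 2 + 1 ≤ j → Nat.choose (n + 1) (2 * j) = 0 :=
    fun j hj => Nat.choose_eq_zero_of_lt (by omega)
  rw [aux_sum_trunc (a := (n + 1) / 2 + 1) (by omega) hc,
    ← aux_sum_trunc (a := (n + 1) / 2 + 1) (b := n + 2) (by omega) hc]
  exact (aux_even_odd n).1

private lemma aux_sum_odd (n N : ℕ) (hN : n + 2 ≤ 2 * N) :
    ∑ j ∈ Finset.range N, Nat.choose (n + 1) (2 * j + 1) = 2 ^ n := by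
  have hc : ∀ j, (n + 1) / 2 + 1 ≤ j → Nat.choose (n + 1) (2 * j + 1) = 0 :=
    fun j hj => Nat.choose_eq_zero_of_lt (by omega)
  rw [aux_sum_trunc (a := (n + 1) / 2 + 1) (by omega) hc,
    ← aux_sum_trunc (a := (n + 1) / 2 + 1) (b := n + 2) (by omega) hc]
  exact (aux_even_odd n).2

/-- For `s ≥ 4`:
`Σ_{w=1}^{s-1} [C(2s-4, 2w-2) + (w-1)·C(2s-5, 2w-2)] = 4^(s-4)·(2s+3)`,
the total number of S-walks over all rectangles of semi-perimeter `s`. -/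
theorem total_S_walks_identity (s : ℕ) (hs : 4 ≤ s) :
    ∑ w ∈ Finset.Icc 1 (s - 1),
        (Nat.choose (2 * s - 4) (2 * w - 2)
          + (w - 1) * Nat.choose (2 * s - 5) (2 * w - 2)) =
      4 ^ (s - 4) * (2 * s + 3) := by
  obtain ⟨m, rfl⟩ : ∃ m, s = m + 4 := ⟨s - 4, by omega⟩
  have hIcc : Finset.Icc 1 (m + 4 - 1) = Finset.Ico 1 (m + 4) := by
    rw [← Finset.Ico_add_one_right_eq_Icc, show m + 4 - 1 + 1 = m + 4 from by omega]
  rw [hIcc, Finset.sum_Ico_eq_sum_range]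
  have hrange : m + 4 - 1 = m + 3 := by omega
  rw [hrange]
  have hcong : ∀ i ∈ Finset.range (m + 3),
      (Nat.choose (2 * (m + 4) - 4) (2 * (1 + i) - 2)
        + ((1 + i) - 1) * Nat.choose (2 * (m + 4) - 5) (2 * (1 + i) - 2)) =
      (Nat.choose (2 * m + 3 + 1) (2 * i) + i * Nat.choose (2 * m + 3) (2 * i)) := by
    intro i _
    have h1 : 2 * (m + 4) - 4 = 2 * m + 3 + 1 := by omega
    have h2 : 2 * (1 + i) - 2 = 2 * i := by omega
    have h3 : 2 * (m + 4) - 5 = 2 * m + 3 := by omega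
    have h4 : 1 + i - 1 = i := by omega
    rw [h1, h2, h3, h4]
  rw [Finset.sum_congr rfl hcong, Finset.sum_add_distrib]
  have hE : ∑ i ∈ Finset.range (m + 3), Nat.choose (2 * m + 3 + 1) (2 * i) =
      2 ^ (2 * m + 3) := aux_sum_even (2 * m + 3) (m + 3) (by omega)
  -- the weighted sum
  set T := ∑ i ∈ Finset.range (m + 3), i * Nat.choose (2 * m + 3) (2 * i) with hT
  have h2T : 2 * T = (2 * m + 3) * 2 ^ (2 * m + 1) := by
    rw [hT, Finset.mul_sum, Finset.sum_range_succ']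
    simp only [Nat.zero_mul, Nat.mul_zero, Nat.add_zero]
    have hterm : ∀ j, 2 * ((j + 1) * Nat.choose (2 * m + 3) (2 * (j + 1))) =
        (2 * m + 3) * Nat.choose (2 * m + 2) (2 * j + 1) := by
      intro j
      have key : (2 * m + 3) * Nat.choose (2 * m + 2) (2 * j + 1) =
          Nat.choose (2 * m + 3) (2 * j + 2) * (2 * j + 2) :=
        Nat.add_one_mul_choose_eq (2 * m + 2) (2 * j + 1)
      have h5 : 2 * (j + 1) = 2 * j + 2 := by ring
      rw [h5, key]; ring
    rw [Finset.sum_congr rfl (fun j _ => hterm j), ← Finset.mul_sum,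
      aux_sum_odd (2 * m + 1) (m + 2) (by omega)]
  rw [hE]
  have h4p : (4 : ℕ) ^ m = 2 ^ (2 * m) := by
    rw [show (4 : ℕ) = 2 ^ 2 by norm_num, ← pow_mul, two_mul, ← two_mul]
  have hTval : T = (2 * m + 3) * 2 ^ (2 * m) := by
    have : 2 * T = 2 * ((2 * m + 3) * 2 ^ (2 * m)) := by rw [h2T]; ring
    omega
  rw [hTval, show m + 4 - 4 = m from by omega, h4p]
  ring
end

section
/- The rejection probability for sampling convex polyominoes of semi-perimeter s decays like 4/√(πs): as s → ∞ along the integers, the real-valued expression ((2s−6) · C(2s−6, s−3)) / (4^{s−4} · (2s+3)) · √(π·s) tends to 4, where C(n,k) denotes the binomial coefficient. -/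
open Filter Real Stirling

lemma cb_eq (n : ℕ) (hn : 1 ≤ n) :
    (Nat.centralBinom n : ℝ) * Real.sqrt n / 4 ^ n
      = stirlingSeq (2 * n) / (stirlingSeq n) ^ 2 := by
  have hfac : (Nat.centralBinom n : ℝ) * (Nat.factorial n : ℝ) ^ 2
      = (Nat.factorial (2 * n) : ℝ) := by
    have h := Nat.choose_mul_factorial_mul_factorial (show n ≤ 2 * n by omega)
    rw [show 2 * n - n = n by omega] at h
    rw [Nat.centralBinom, ← h]
    push_cast; ring
  have ha : (0:ℝ) < (n:ℝ) := by exact_mod_cast hn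
  have hsq : ∀ x : ℝ, x ^ (2 * n) = (x ^ n) ^ 2 := fun x => by
    rw [two_mul, pow_add, sq]
  have h2n : Real.sqrt (2 * ((2 * n : ℕ) : ℝ)) = 2 * Real.sqrt n := by
    push_cast
    rw [show (2 : ℝ) * (2 * n) = 2 ^ 2 * n by ring,
      Real.sqrt_mul (by positivity), Real.sqrt_sq (by norm_num)]
  have hpow : (((2 * n : ℕ) : ℝ) / Real.exp 1) ^ (2 * n)
      = 4 ^ n * (((n:ℝ) / Real.exp 1) ^ n) ^ 2 := by
    push_cast
    rw [show (2 : ℝ) * n / Real.exp 1 = 2 * ((n:ℝ) / Real.exp 1) by ring,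
      mul_pow, show (4:ℝ) = 2^2 by norm_num, ← pow_mul]
    simp only [hsq]
  rw [stirlingSeq, stirlingSeq, h2n, hpow]
  generalize hP : ((n:ℝ) / Real.exp 1) ^ n = p
  generalize hQ : Real.sqrt (n:ℝ) = q
  generalize hR : Real.sqrt (2 * (n:ℝ)) = r
  have hp0 : p ≠ 0 := by rw [← hP]; positivity
  have hq0 : 0 < q := by rw [← hQ]; exact Real.sqrt_pos.mpr ha
  have hqq : q * q = (n:ℝ) := by rw [← hQ]; exact Real.mul_self_sqrt ha.le
  have hr0 : 0 < r := by rw [← hR]; exact Real.sqrt_pos.mpr (by positivity)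
  have hrr : r * r = 2 * (n:ℝ) := by
    rw [← hR]; exact Real.mul_self_sqrt (by positivity)
  have hfn : (Nat.factorial n : ℝ) ≠ 0 := by positivity
  field_simp
  linear_combination r ^ 2 * hfac
    + (2 * (Nat.centralBinom n : ℝ) * (Nat.factorial n : ℝ) ^ 2) * hqq
    - ((Nat.centralBinom n : ℝ) * (Nat.factorial n : ℝ) ^ 2) * hrr


lemma cb_tendsto :
    Tendsto (fun n : ℕ => (Nat.centralBinom n : ℝ) * Real.sqrt n / 4 ^ n)
      atTop (nhds (1 / Real.sqrt π)) := by
  have h2 : Tendsto (fun n : ℕ => 2 * n) atTop atTop :=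
    tendsto_atTop_mono (fun n => by simp only [id_eq]; omega) tendsto_id
  have h1 : Tendsto (fun n : ℕ => stirlingSeq (2 * n) / (stirlingSeq n) ^ 2)
      atTop (nhds (Real.sqrt π / (Real.sqrt π) ^ 2)) := by
    exact (Stirling.tendsto_stirlingSeq_sqrt_pi.comp h2).div
      (Stirling.tendsto_stirlingSeq_sqrt_pi.pow 2)
      (by positivity)
  have hval : Real.sqrt π / (Real.sqrt π) ^ 2 = 1 / Real.sqrt π := by
    have h : (0:ℝ) < Real.sqrt π := Real.sqrt_pos.mpr Real.pi_pos
    field_simp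
  rw [← hval]
  apply h1.congr'
  filter_upwards [eventually_ge_atTop 1] with n hn
  exact (cb_eq n hn).symm

/-- The rejection probability for sampling convex polyominoes of
semi-perimeter `s` decays like `4/√(πs)`: as `s → ∞`,
`((2s-6)·C(2s-6, s-3)) / (4^(s-4)·(2s+3)) · √(π·s) → 4`. -/
theorem rejection_probability_asymptotics :
    Tendsto (fun s : ℕ =>
        (((2 * s - 6) * Nat.choose (2 * s - 6) (s - 3) : ℕ) : ℝ)
            / ((4 : ℝ) ^ (s - 4) * (2 * (s : ℝ) + 3))
          * Real.sqrt (Real.pi * s))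
      atTop (nhds 4) := by
  rw [← Filter.tendsto_add_atTop_iff_nat 4]
  have hre : ∀ n : ℕ,
      (((2 * (n + 4) - 6) * Nat.choose (2 * (n + 4) - 6) ((n + 4) - 3) : ℕ) : ℝ)
            / ((4 : ℝ) ^ ((n + 4) - 4) * (2 * ((n + 4 : ℕ) : ℝ) + 3))
          * Real.sqrt (Real.pi * ((n + 4 : ℕ) : ℝ))
        = ((Nat.centralBinom (n + 1) : ℝ) * Real.sqrt ((n : ℝ) + 1) / 4 ^ (n + 1))
            * ((2 * (n : ℝ) + 2) * 4 / (2 * (n : ℝ) + 11))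
            * Real.sqrt (π * ((n : ℝ) + 4) / ((n : ℝ) + 1)) := by
    intro n
    rw [show 2 * (n + 4) - 6 = 2 * (n + 1) by omega, show (n + 4) - 3 = n + 1 by omega,
      show (n + 4) - 4 = n by omega, ← Nat.centralBinom]
    have hq : (0:ℝ) < (n : ℝ) + 1 := by positivity
    have hsd : Real.sqrt (π * ((n : ℝ) + 4) / ((n : ℝ) + 1))
        = Real.sqrt (π * ((n : ℝ) + 4)) / Real.sqrt ((n : ℝ) + 1) :=
      Real.sqrt_div (by positivity) _
    rw [hsd]
    push_cast
    generalize hS : Real.sqrt (π * ((n : ℝ) + 4)) = S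
    generalize hQ : Real.sqrt ((n : ℝ) + 1) = q
    have hq0 : 0 < q := by rw [← hQ]; exact Real.sqrt_pos.mpr hq
    have hqq : q * q = (n : ℝ) + 1 := by rw [← hQ]; exact Real.mul_self_sqrt hq.le
    have h11 : (2 * (n : ℝ) + 11) ≠ 0 := by positivity
    rw [show ((n:ℝ) + 4) = (n:ℝ) + 4 from rfl]
    field_simp
    ring_nf
  have hmain : Tendsto (fun n : ℕ =>
      ((Nat.centralBinom (n + 1) : ℝ) * Real.sqrt ((n : ℝ) + 1) / 4 ^ (n + 1))
        * ((2 * (n : ℝ) + 2) * 4 / (2 * (n : ℝ) + 11))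
        * Real.sqrt (π * ((n : ℝ) + 4) / ((n : ℝ) + 1)))
      atTop (nhds ((1 / Real.sqrt π) * 4 * Real.sqrt π)) := by
    have t1 : Tendsto (fun n : ℕ =>
        (Nat.centralBinom (n + 1) : ℝ) * Real.sqrt ((n : ℝ) + 1) / 4 ^ (n + 1))
        atTop (nhds (1 / Real.sqrt π)) := by
      have := cb_tendsto.comp (tendsto_add_atTop_nat 1)
      apply this.congr
      intro n
      simp only [Function.comp]
      push_cast
      ring_nf
    have tA : Tendsto (fun n : ℕ => 2 * (n : ℝ) + 11) atTop atTop := by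
      apply tendsto_atTop_add_const_right
      exact tendsto_natCast_atTop_atTop.const_mul_atTop (by norm_num)
    have t2 : Tendsto (fun n : ℕ => (2 * (n : ℝ) + 2) * 4 / (2 * (n : ℝ) + 11))
        atTop (nhds 4) := by
      have : Tendsto (fun n : ℕ => 4 - 36 / (2 * (n : ℝ) + 11)) atTop (nhds (4 - 0)) :=
        tendsto_const_nhds.sub (tendsto_const_nhds.div_atTop tA)
      rw [sub_zero] at this
      apply this.congr'
      filter_upwards [eventually_gt_atTop 0] with n hn
      have h11 : (2 * (n : ℝ) + 11) ≠ 0 := by positivity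
      field_simp
      ring
    have t3 : Tendsto (fun n : ℕ => Real.sqrt (π * ((n : ℝ) + 4) / ((n : ℝ) + 1)))
        atTop (nhds (Real.sqrt π)) := by
      have inner : Tendsto (fun n : ℕ => π * ((n : ℝ) + 4) / ((n : ℝ) + 1))
          atTop (nhds π) := by
        have tB : Tendsto (fun n : ℕ => (n : ℝ) + 1) atTop atTop :=
          tendsto_atTop_add_const_right _ _ tendsto_natCast_atTop_atTop
        have : Tendsto (fun n : ℕ => π + 3 * π / ((n : ℝ) + 1)) atTop (nhds (π + 0)) :=
          tendsto_const_nhds.add (tendsto_const_nhds.div_atTop tB)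
        rw [add_zero] at this
        apply this.congr'
        filter_upwards [eventually_gt_atTop 0] with n hn
        have h1 : ((n : ℝ) + 1) ≠ 0 := by positivity
        field_simp
        ring
      exact (Real.continuous_sqrt.tendsto π).comp inner
    exact (t1.mul t2).mul t3
  have h4 : (1 / Real.sqrt π) * 4 * Real.sqrt π = 4 := by
    have h : (0:ℝ) < Real.sqrt π := Real.sqrt_pos.mpr Real.pi_pos
    field_simp
  rw [h4] at hmain
  exact hmain.congr (fun n => (hre n).symm)
end
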